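/- arXiv:1503.04057 — 7 statements merged into one kernel-verified Lean document; each statement's English description precedes it below -/
import Mathlib

section
/- There exist ĉ > 0 and M > 0, depending only on b, β and S (in particular independent of ε), such that for all ε > 0 and all c ∈ (0, ĉ) with ε/c > M, every nonconstant solution p = (u,v,w,q) of system (1) with lim_{t→−∞} p(t) = p₀, u(0) = u_m, and w > 0 on (−∞,0] satisfies v(t) > u(t) for all t ∈ ℝ and u(t) > 1 for some t. In particular no such solution is a homoclinic orbit, so if system (1) has a homoclinic orbit of this normalized form at a speed c < ĉ, then ε/c ≤ M. -/
/-! Let `Q(u) = 1/(1 + βS(u))` be the `q`-nullcline and `ψ = q - Q(u)`. While `w > 0` and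
`v ≤ 1`, the energy `w²/2 - b²v` decreases, so `w ≤ √(2b²(1 - u₀))`, and integrating
`(v - u)' = w - (v - u)/c` gives `0 < v - u ≤ c √(2b²(1 - u₀))`: the speed `u' = (v - u)/c` is
bounded independently of `c`. So for large `ε/c` the relaxation of `q` towards `Q(u)` wins and
`ψ < δ`, where `2δ` is a lower bound of `u - Q(u)S(u)` on `[u_m, 1]` (it vanishes only at `u₀`,
by (C1)). Then `v - qS(u) ≥ δ` for `u ∈ [u_m, 1]`, so `w` cannot vanish; a first-failure argument
gives `w > 0` for all time. If `v` stayed `≤ 1`, `w' ≥ b²δ` would contradict the energy bound;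
once `v > 1`, `w` and `v` keep increasing and `u' ≥ 1/c` eventually pushes `u` past `1`.
A homoclinic orbit would need the increasing `u` to return to `u₀ < u_m`. -/

open Filter Topology

noncomputable section

/-- `SolOne b β S ε c u v w q` : `p = (u,v,w,q)` solves system (1):
`u' = (v−u)/c, v' = w, w' = b²(v − q S(u)), q' = (ε/c)(1 − q − β q S(u))`. -/
def SolOne (b β : ℝ) (S : ℝ → ℝ) (ε c : ℝ) (u v w q : ℝ → ℝ) : Prop :=
  ∀ t : ℝ,
    HasDerivAt u ((v t - u t) / c) t ∧
    HasDerivAt v (w t) t ∧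
    HasDerivAt w (b ^ 2 * (v t - q t * S (u t))) t ∧
    HasDerivAt q (ε / c * (1 - q t - β * (q t * S (u t)))) t

/-- `SolFast b S q₀ c u v w` : `r = (u,v,w)` solves the fast system (2):
`u' = (v−u)/c, v' = w, w' = b²(v − q₀ S(u))`. -/
def SolFast (b : ℝ) (S : ℝ → ℝ) (q₀ c : ℝ) (u v w : ℝ → ℝ) : Prop :=
  ∀ t : ℝ,
    HasDerivAt u ((v t - u t) / c) t ∧
    HasDerivAt v (w t) t ∧
    HasDerivAt w (b ^ 2 * (v t - q₀ * S (u t))) t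

/-- `(u,v,w,q)` is a nonconstant curve. -/
def Nonconst4 (u v w q : ℝ → ℝ) : Prop :=
  ∃ t s : ℝ, (u t, v t, w t, q t) ≠ (u s, v s, w s, q s)

/-- `(u,v,w)` is a nonconstant curve. -/
def Nonconst3 (u v w : ℝ → ℝ) : Prop :=
  ∃ t s : ℝ, (u t, v t, w t) ≠ (u s, v s, w s)

/-- System (1) has a homoclinic orbit (travelling pulse) at speed `c`:
a nonconstant solution tending to `p₀ = (u₀,u₀,0,q₀)` at both `±∞`. -/
def Homoclinic (b β : ℝ) (S : ℝ → ℝ) (ε c u₀ q₀ : ℝ) : Prop :=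
  ∃ u v w q : ℝ → ℝ,
    SolOne b β S ε c u v w q ∧ Nonconst4 u v w q ∧
    Tendsto (fun t => (u t, v t, w t, q t)) atBot (𝓝 (u₀, u₀, 0, q₀)) ∧
    Tendsto (fun t => (u t, v t, w t, q t)) atTop (𝓝 (u₀, u₀, 0, q₀))

/-- `c₀` is a front speed: the fast system (2) at speed `c₀` has a nonconstant
solution from `(u₀,u₀,0)` at `−∞` to `(uP,uP,0)` at `+∞` with `w > 0` on `ℝ`. -/
def FrontSpeed (b : ℝ) (S : ℝ → ℝ) (q₀ u₀ uP c₀ : ℝ) : Prop :=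
  0 < c₀ ∧
  ∃ u v w : ℝ → ℝ,
    SolFast b S q₀ c₀ u v w ∧ Nonconst3 u v w ∧
    Tendsto (fun t => (u t, v t, w t)) atBot (𝓝 (u₀, u₀, 0)) ∧
    (∀ t : ℝ, 0 < w t) ∧
    Tendsto (fun t => (u t, v t, w t)) atTop (𝓝 (uP, uP, 0))

/-- Normalized fast solution at speed `c`: a nonconstant solution of (2) with
`r(−∞) = (u₀,u₀,0)`, `u(0) = u_m` and `w > 0` on `(−∞,0]`. -/
def NormalizedFast (b : ℝ) (S : ℝ → ℝ) (q₀ u₀ uM c : ℝ) (u v w : ℝ → ℝ) : Prop :=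
  SolFast b S q₀ c u v w ∧ Nonconst3 u v w ∧
  Tendsto (fun t => (u t, v t, w t)) atBot (𝓝 (u₀, u₀, 0)) ∧
  u 0 = uM ∧ (∀ t : ℝ, t ≤ 0 → 0 < w t)

open Set

theorem forall_of_isOpen_of_eventually_atBot {P : ℝ → Prop} (hopen : IsOpen {t | P t})
    (hbot : ∀ᶠ t in atBot, P t) (hstep : ∀ t, (∀ s < t, P s) → P t) : ∀ t, P t := by
  by_contra! hfail
  obtain ⟨a, ha⟩ := eventually_atBot.1 hbot
  have hbdd : BddBelow {t | ¬P t} := ⟨a, fun t ht => le_of_lt (not_le.1 fun h => ht (ha t h))⟩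
  have hmem : sInf {t | ¬P t} ∈ {t | ¬P t} := hopen.isClosed_compl.csInf_mem hfail hbdd
  exact hmem (hstep _ fun s hs => not_not.1 (notMem_of_lt_csInf hs hbdd))

theorem HasDerivAt.nonneg_of_forall_lt_le {f : ℝ → ℝ} {f' t : ℝ} (hf : HasDerivAt f f' t)
    (hle : ∀ s < t, f s ≤ f t) : 0 ≤ f' := by
  refine ge_of_tendsto (hasDerivAt_iff_tendsto_slope_left_right.1 hf).1 ?_
  filter_upwards [self_mem_nhdsWithin] with s (hs : s < t)
  rw [slope_def_field]
  exact div_nonneg_of_nonpos (sub_nonpos.2 (hle s hs)) (sub_nonpos.2 hs.le)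

theorem HasDerivAt.nonpos_of_forall_lt_le {f : ℝ → ℝ} {f' t : ℝ} (hf : HasDerivAt f f' t)
    (hle : ∀ s < t, f t ≤ f s) : f' ≤ 0 :=
  neg_nonneg.1 (hf.neg.nonneg_of_forall_lt_le fun s hs => neg_le_neg (hle s hs))

theorem monotoneOn_Iic_of_hasDerivAt_nonneg {f f' : ℝ → ℝ} {T : ℝ}
    (hf : ∀ t, HasDerivAt f (f' t) t) (hf' : ∀ t < T, 0 ≤ f' t) : MonotoneOn f (Iic T) :=
  monotoneOn_of_hasDerivWithinAt_nonneg (convex_Iic T)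
    (fun t _ => (hf t).continuousAt.continuousWithinAt) (fun t _ => (hf t).hasDerivWithinAt)
    (fun t ht => hf' t (by rwa [interior_Iic] at ht))

theorem strictMonoOn_Iic_of_hasDerivAt_pos {f f' : ℝ → ℝ} {T : ℝ}
    (hf : ∀ t, HasDerivAt f (f' t) t) (hf' : ∀ t < T, 0 < f' t) : StrictMonoOn f (Iic T) :=
  strictMonoOn_of_hasDerivWithinAt_pos (convex_Iic T)
    (fun t _ => (hf t).continuousAt.continuousWithinAt) (fun t _ => (hf t).hasDerivWithinAt)
    (fun t ht => hf' t (by rwa [interior_Iic] at ht))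

theorem antitoneOn_Iic_of_hasDerivAt_nonpos {f f' : ℝ → ℝ} {T : ℝ}
    (hf : ∀ t, HasDerivAt f (f' t) t) (hf' : ∀ t < T, f' t ≤ 0) : AntitoneOn f (Iic T) :=
  antitoneOn_of_hasDerivWithinAt_nonpos (convex_Iic T)
    (fun t _ => (hf t).continuousAt.continuousWithinAt) (fun t _ => (hf t).hasDerivWithinAt)
    (fun t ht => hf' t (by rwa [interior_Iic] at ht))

theorem MonotoneOn.le_of_tendsto_atBot {f : ℝ → ℝ} {T L : ℝ} (hf : MonotoneOn f (Iic T))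
    (hL : Tendsto f atBot (𝓝 L)) {s : ℝ} (hs : s ≤ T) : L ≤ f s :=
  le_of_tendsto hL (eventually_atBot.2 ⟨s, fun _ hr => hf (hr.trans hs) hs hr⟩)

theorem StrictMonoOn.lt_of_tendsto_atBot {f : ℝ → ℝ} {T L : ℝ} (hf : StrictMonoOn f (Iic T))
    (hL : Tendsto f atBot (𝓝 L)) {s : ℝ} (hs : s ≤ T) : L < f s :=
  (hf.monotoneOn.le_of_tendsto_atBot hL (by linarith : s - 1 ≤ T)).trans_lt
    (hf (by simp only [mem_Iic]; linarith) hs (by linarith))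

theorem AntitoneOn.le_of_tendsto_atBot {f : ℝ → ℝ} {T L : ℝ} (hf : AntitoneOn f (Iic T))
    (hL : Tendsto f atBot (𝓝 L)) {s : ℝ} (hs : s ≤ T) : f s ≤ L :=
  neg_le_neg_iff.1 (hf.neg.le_of_tendsto_atBot hL.neg hs)

theorem add_mul_sub_le_of_le_hasDerivAt {f f' : ℝ → ℝ} {a k : ℝ}
    (hf : ∀ t, HasDerivAt f (f' t) t) (hk : ∀ t ≥ a, k ≤ f' t) {t : ℝ} (ht : a ≤ t) :
    f a + k * (t - a) ≤ f t := by
  have := (convex_Ici a).mul_sub_le_image_sub_of_le_deriv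
    (fun t _ => (hf t).continuousAt.continuousWithinAt)
    (fun t _ => (hf t).differentiableAt.differentiableWithinAt)
    (fun s hs => by rw [(hf s).deriv]; exact hk s (interior_subset hs)) a self_mem_Ici t ht ht
  linarith

theorem exists_lt_of_pos_le_hasDerivAt {f f' : ℝ → ℝ} {a k : ℝ}
    (hf : ∀ t, HasDerivAt f (f' t) t) (hk₀ : 0 < k) (hk : ∀ t ≥ a, k ≤ f' t) (B : ℝ) :
    ∃ t ≥ a, B < f t := by
  have hT : a ≤ a + (|B - f a| + 1) / k := le_add_of_nonneg_right (by positivity)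
  refine ⟨_, hT, ?_⟩
  have h := add_mul_sub_le_of_le_hasDerivAt hf hk hT
  rw [add_sub_cancel_left, mul_div_cancel₀ _ hk₀.ne'] at h
  linarith [le_abs_self (B - f a)]

section Relaxation

variable {c T : ℝ} {u v w : ℝ → ℝ}

theorem hasDerivAt_sub_sub_mul_exp (hc : c ≠ 0) (hu : ∀ t, HasDerivAt u ((v t - u t) / c) t)
    (hv : ∀ t, HasDerivAt v (w t) t) (K t : ℝ) :
    HasDerivAt (fun t => (v t - u t - K) * Real.exp (t / c))
      ((w t - K / c) * Real.exp (t / c)) t := by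
  have := (((hv t).sub (hu t)).sub_const K).mul
    ((Real.hasDerivAt_exp _).comp t ((hasDerivAt_id t).div_const c))
  refine this.congr_deriv ?_
  simp only [Function.comp_apply, id, Pi.sub_apply]
  field_simp
  ring

theorem tendsto_sub_sub_mul_exp_atBot (hc : 0 < c)
    (hlim : Tendsto (fun t => v t - u t) atBot (𝓝 0)) (K : ℝ) :
    Tendsto (fun t => (v t - u t - K) * Real.exp (t / c)) atBot (𝓝 0) := by
  simpa using (hlim.sub_const K).mul
    (Real.tendsto_exp_atBot.comp (tendsto_id.atBot_div_const hc))

theorem sub_pos_of_forall_lt_pos (hc : 0 < c) (hu : ∀ t, HasDerivAt u ((v t - u t) / c) t)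
    (hv : ∀ t, HasDerivAt v (w t) t) (hlim : Tendsto (fun t => v t - u t) atBot (𝓝 0))
    (hw : ∀ s < T, 0 < w s) {s : ℝ} (hs : s ≤ T) : 0 < v s - u s := by
  have hmono := strictMonoOn_Iic_of_hasDerivAt_pos (hasDerivAt_sub_sub_mul_exp hc.ne' hu hv 0)
    fun t ht => by simpa using mul_pos (hw t ht) (Real.exp_pos (t / c))
  simpa using pos_of_mul_pos_left (hmono.lt_of_tendsto_atBot
    (tendsto_sub_sub_mul_exp_atBot hc hlim 0) hs) (Real.exp_pos (s / c)).le

theorem sub_le_mul_of_forall_lt_le (hc : 0 < c) (hu : ∀ t, HasDerivAt u ((v t - u t) / c) t)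
    (hv : ∀ t, HasDerivAt v (w t) t) (hlim : Tendsto (fun t => v t - u t) atBot (𝓝 0))
    {W : ℝ} (hw : ∀ s < T, w s ≤ W) {s : ℝ} (hs : s ≤ T) : v s - u s ≤ c * W := by
  have hanti := antitoneOn_Iic_of_hasDerivAt_nonpos
    (hasDerivAt_sub_sub_mul_exp hc.ne' hu hv (c * W)) fun t ht => by
      rw [mul_div_cancel_left₀ _ hc.ne']
      exact mul_nonpos_of_nonpos_of_nonneg (sub_nonpos.2 (hw t ht)) (Real.exp_pos _).le
  have := nonpos_of_mul_nonpos_left (hanti.le_of_tendsto_atBot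
    (tendsto_sub_sub_mul_exp_atBot hc hlim (c * W)) hs) (Real.exp_pos (s / c))
  linarith

end Relaxation

theorem sq_div_two_le_of_energy {b v₀ T : ℝ} {v w r : ℝ → ℝ} (hv : ∀ t, HasDerivAt v (w t) t)
    (hw : ∀ t, HasDerivAt w (b ^ 2 * (v t - r t)) t) (hv₀ : Tendsto v atBot (𝓝 v₀))
    (hw₀ : Tendsto w atBot (𝓝 0)) (hT : ∀ s < T, 0 ≤ w s ∧ v s - r s ≤ 1) {s : ℝ}
    (hs : s ≤ T) : w s ^ 2 / 2 ≤ b ^ 2 * (v s - v₀) := by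
  have hG : ∀ t, HasDerivAt (fun t => w t ^ 2 / 2 - b ^ 2 * v t)
      (b ^ 2 * (w t * (v t - r t - 1))) t := fun t => by
    refine ((((hw t).pow 2).div_const 2).sub ((hv t).const_mul (b ^ 2))).congr_deriv ?_
    push_cast
    ring
  have hanti := antitoneOn_Iic_of_hasDerivAt_nonpos hG fun t ht =>
    mul_nonpos_of_nonneg_of_nonpos (sq_nonneg b)
      (mul_nonpos_of_nonneg_of_nonpos (hT t ht).1 (by linarith [(hT t ht).2]))
  have hlim : Tendsto (fun t => w t ^ 2 / 2 - b ^ 2 * v t) atBot (𝓝 (-(b ^ 2 * v₀))) := by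
    simpa using ((hw₀.pow 2).div_const 2).sub (hv₀.const_mul (b ^ 2))
  have := hanti.le_of_tendsto_atBot hlim hs
  linarith

def qNullcline (β : ℝ) (S : ℝ → ℝ) (x : ℝ) : ℝ := (1 + β * S x)⁻¹

theorem qNullcline_mul {β : ℝ} {S : ℝ → ℝ} {x : ℝ} (hβS : 0 ≤ β * S x) :
    qNullcline β S x * (1 + β * S x) = 1 :=
  inv_mul_cancel₀ (by positivity)

theorem qNullcline_mem_Ioo {β : ℝ} {S : ℝ → ℝ} {x : ℝ} (hβS : 0 < β * S x) :
    qNullcline β S x ∈ Ioo 0 1 :=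
  ⟨by unfold qNullcline; positivity, inv_lt_one_of_one_lt₀ (by linarith)⟩

theorem contDiff_qNullcline {β : ℝ} {S : ℝ → ℝ} (hS : ContDiff ℝ 1 S)
    (hβS : ∀ x, 0 ≤ β * S x) : ContDiff ℝ 1 (qNullcline β S) :=
  (contDiff_const.add (contDiff_const.mul hS)).inv fun x => by linarith [hβS x]

theorem le_sub_mul_of_le_qNullcline_add {β δ x v q : ℝ} {S : ℝ → ℝ} (hS0 : 0 < S x)
    (hS1 : S x < 1) (hδ : 0 ≤ δ) (hg : 2 * δ ≤ x - qNullcline β S x * S x) (hxv : x ≤ v)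
    (hq : q ≤ qNullcline β S x + δ) : δ ≤ v - q * S x := by
  nlinarith [mul_le_mul_of_nonneg_right hq hS0.le, mul_le_mul_of_nonneg_left hS1.le hδ]

-- The derivative of `q - Q(u)` where `q ≥ Q(u) + δ`: fast relaxation beats the drift of `Q(u)`.
theorem mul_sub_sub_mul_lt_zero {β ε c δ L W x q z Q' : ℝ} {S : ℝ → ℝ} (hc : 0 < c)
    (hεc : 0 ≤ ε / c) (hδ : 0 < δ) (hβS : 0 ≤ β * S x) (hq : qNullcline β S x + δ ≤ q)
    (hz : 0 < z) (hzW : z ≤ c * W) (hQ' : |Q'| ≤ L) (hM : L * W < ε / c * δ) :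
    ε / c * (1 - q - β * (q * S x)) - Q' * (z / c) < 0 := by
  have hrate : 1 - q - β * (q * S x) ≤ -δ := by
    nlinarith [qNullcline_mul hβS, mul_le_mul_of_nonneg_right hq (by linarith : 0 ≤ 1 + β * S x)]
  have hzc : z / c ≤ W := (div_le_iff₀ hc).2 (by linarith)
  have hdrift : -Q' * (z / c) ≤ L * W := calc
    -Q' * (z / c) ≤ |Q'| * (z / c) := by gcongr; exact neg_le_abs Q'
    _ ≤ L * W := mul_le_mul hQ' hzc (by positivity) ((abs_nonneg Q').trans hQ')
  nlinarith [mul_le_mul_of_nonneg_left hrate hεc]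

namespace SolOne

variable {b β ε c : ℝ} {S u v w q : ℝ → ℝ}

theorem continuous_u (h : SolOne b β S ε c u v w q) : Continuous u :=
  continuous_iff_continuousAt.2 fun t => (h t).1.continuousAt

theorem continuous_v (h : SolOne b β S ε c u v w q) : Continuous v :=
  continuous_iff_continuousAt.2 fun t => (h t).2.1.continuousAt

theorem continuous_w (h : SolOne b β S ε c u v w q) : Continuous w :=
  continuous_iff_continuousAt.2 fun t => (h t).2.2.1.continuousAt

theorem continuous_q (h : SolOne b β S ε c u v w q) : Continuous q :=
  continuous_iff_continuousAt.2 fun t => (h t).2.2.2.continuousAt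

theorem hasDerivAt_q_sub_comp_u (h : SolOne b β S ε c u v w q) {Q : ℝ → ℝ}
    (hQ : Differentiable ℝ Q) (t : ℝ) :
    HasDerivAt (fun s => q s - Q (u s))
      (ε / c * (1 - q t - β * (q t * S (u t))) - deriv Q (u t) * ((v t - u t) / c)) t :=
  (h t).2.2.2.sub ((hQ (u t)).hasDerivAt.comp t (h t).1)

theorem q_mem_Ioo (h : SolOne b β S ε c u v w q) (hβ : 0 < β) (hS0 : ∀ x, 0 < S x)
    (hεc : 0 < ε / c) {q₀ : ℝ} (hq : Tendsto q atBot (𝓝 q₀)) (hq₀ : q₀ ∈ Ioo 0 1) :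
    ∀ t, q t ∈ Ioo 0 1 := by
  refine forall_of_isOpen_of_eventually_atBot (isOpen_Ioo.preimage h.continuous_q)
    (hq.eventually (isOpen_Ioo.mem_nhds hq₀)) fun t hprior => ⟨?_, ?_⟩
  · by_contra! hq0
    have := (h t).2.2.2.nonpos_of_forall_lt_le fun s hs => hq0.trans (hprior s hs).1.le
    have := mul_pos hβ (hS0 (u t))
    nlinarith [mul_nonneg (neg_nonneg.2 hq0) this.le]
  · by_contra! hq1
    have := (h t).2.2.2.nonneg_of_forall_lt_le fun s hs => (hprior s hs).2.le.trans hq1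
    have := mul_pos hβ (hS0 (u t))
    nlinarith [mul_le_mul_of_nonneg_right hq1 this.le]

theorem exists_one_lt_u (h : SolOne b β S ε c u v w q) (hc : 0 < c)
    (hS1 : ∀ x, S x < 1) (hq : ∀ t, q t ∈ Ioo 0 1) (hw : ∀ t, 0 < w t)
    (hv : ∃ t, 1 < v t) : ∃ t, 1 < u t := by
  obtain ⟨t₁, ht₁⟩ := hv
  have hv_mono : Monotone v := monotone_of_hasDerivAt_nonneg (fun t => (h t).2.1) fun t => (hw t).le
  have hw_ge : ∀ t ≥ t₁, w t₁ ≤ w t := fun t ht => by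
    have := add_mul_sub_le_of_le_hasDerivAt (fun t => (h t).2.2.1) (k := 0) (fun s hs => by
      have : q s * S (u s) < 1 := by nlinarith [(hq s).1, (hq s).2, hS1 (u s)]
      nlinarith [hv_mono hs, sq_nonneg b]) ht
    linarith
  obtain ⟨t₂, ht₂, hvt₂⟩ := exists_lt_of_pos_le_hasDerivAt (fun t => (h t).2.1) (hw t₁) hw_ge 2
  by_contra! hu1
  obtain ⟨t, -, hut⟩ := exists_lt_of_pos_le_hasDerivAt (a := t₂) (fun t => (h t).1)
    (one_div_pos.2 hc)
    (fun s hs => div_le_div_of_nonneg_right (by linarith [hv_mono hs, hu1 s]) hc.le) 1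
  linarith [hu1 t]

end SolOne

structure NormalizedSolOne (b β : ℝ) (S : ℝ → ℝ) (ε c u₀ q₀ u_m : ℝ) (u v w q : ℝ → ℝ) :
    Prop where
  sol : SolOne b β S ε c u v w q
  tendsto_atBot : Tendsto (fun t => (u t, v t, w t, q t)) atBot (𝓝 (u₀, u₀, 0, q₀))
  u_zero : u 0 = u_m
  w_pos : ∀ t ≤ 0, 0 < w t

namespace NormalizedSolOne

variable {b β ε c u₀ q₀ u_m δ L : ℝ} {S u v w q : ℝ → ℝ}

theorem tendsto_atBot_components (hp : NormalizedSolOne b β S ε c u₀ q₀ u_m u v w q) :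
    Tendsto u atBot (𝓝 u₀) ∧ Tendsto v atBot (𝓝 u₀) ∧ Tendsto w atBot (𝓝 0) ∧
      Tendsto q atBot (𝓝 q₀) := by
  simpa only [Prod.tendsto_iff] using hp.tendsto_atBot

theorem tendsto_sub_atBot (hp : NormalizedSolOne b β S ε c u₀ q₀ u_m u v w q) :
    Tendsto (fun t => v t - u t) atBot (𝓝 0) := by
  simpa using hp.tendsto_atBot_components.2.1.sub hp.tendsto_atBot_components.1

theorem u_lt_v (hp : NormalizedSolOne b β S ε c u₀ q₀ u_m u v w q) (hc : 0 < c) {T : ℝ}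
    (hw : ∀ s < T, 0 < w s) {s : ℝ} (hs : s ≤ T) : u s < v s :=
  sub_pos.1 <| sub_pos_of_forall_lt_pos hc (fun t => (hp.sol t).1) (fun t => (hp.sol t).2.1)
    hp.tendsto_sub_atBot hw hs

theorem monotoneOn_u (hp : NormalizedSolOne b β S ε c u₀ q₀ u_m u v w q) (hc : 0 < c) {T : ℝ}
    (hw : ∀ s < T, 0 < w s) : MonotoneOn u (Iic T) :=
  monotoneOn_Iic_of_hasDerivAt_nonneg (fun t => (hp.sol t).1) fun _ ht =>
    div_nonneg (sub_nonneg.2 (hp.u_lt_v hc hw ht.le).le) hc.le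

theorem w_le_sqrt (hp : NormalizedSolOne b β S ε c u₀ q₀ u_m u v w q) (hS0 : ∀ x, 0 < S x)
    (hq : ∀ t, q t ∈ Ioo 0 1) {T : ℝ} (hw : ∀ s < T, 0 < w s) (hv : ∀ s ≤ T, v s ≤ 1)
    {s : ℝ} (hs : s ≤ T) : w s ≤ √(2 * b ^ 2 * (1 - u₀)) := by
  have hT : ∀ s < T, 0 ≤ w s ∧ v s - q s * S (u s) ≤ 1 := fun s hs =>
    ⟨(hw s hs).le, by nlinarith [hv s hs.le, mul_pos (hq s).1 (hS0 (u s))]⟩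
  have := sq_div_two_le_of_energy (fun t => (hp.sol t).2.1) (fun t => (hp.sol t).2.2.1)
    hp.tendsto_atBot_components.2.1 hp.tendsto_atBot_components.2.2.1 hT hs
  refine (le_abs_self _).trans (Real.abs_le_sqrt ?_)
  nlinarith [hv s hs, sq_nonneg b]

theorem sub_qNullcline_lt_step (hp : NormalizedSolOne b β S ε c u₀ q₀ u_m u v w q) (hc : 0 < c)
    (hεc : 0 ≤ ε / c) (hδ : 0 < δ) (hβ : 0 ≤ β) (hS0 : ∀ x, 0 < S x) (hq : ∀ t, q t ∈ Ioo 0 1)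
    (hQ : Differentiable ℝ (qNullcline β S))
    (hL : ∀ x ∈ Icc u₀ 1, |deriv (qNullcline β S) x| ≤ L)
    (hM : L * √(2 * b ^ 2 * (1 - u₀)) < ε / c * δ) {t : ℝ} (hw : ∀ s < t, 0 < w s)
    (hψ : ∀ s < t, 1 < v s ∨ q s - qNullcline β S (u s) < δ) :
    1 < v t ∨ q t - qNullcline β S (u t) < δ := by
  by_contra! ⟨hvt, hψt⟩
  have hv_mono := monotoneOn_Iic_of_hasDerivAt_nonneg (fun s => (hp.sol s).2.1)
    fun s hs => (hw s hs).le
  have hv1 : ∀ s ≤ t, v s ≤ 1 := fun s hs => (hv_mono hs self_mem_Iic hs).trans hvt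
  have hdψ := (hp.sol.hasDerivAt_q_sub_comp_u hQ t).nonneg_of_forall_lt_le fun s hs =>
    ((hψ s hs).resolve_left (not_lt.2 (hv1 s hs.le))).le.trans hψt
  have hz := sub_le_mul_of_forall_lt_le hc (fun s => (hp.sol s).1) (fun s => (hp.sol s).2.1)
    hp.tendsto_sub_atBot (fun s hs => hp.w_le_sqrt hS0 hq hw hv1 hs.le) le_rfl
  have hu₀ : u₀ ≤ u t :=
    (hp.monotoneOn_u hc hw).le_of_tendsto_atBot hp.tendsto_atBot_components.1 le_rfl
  have huv := hp.u_lt_v hc hw le_rfl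
  exact (mul_sub_sub_mul_lt_zero hc hεc hδ (mul_nonneg hβ (hS0 _).le) (by linarith)
    (sub_pos.2 huv) hz (hL _ ⟨hu₀, by linarith⟩) hM).not_ge hdψ

theorem w_pos_step (hp : NormalizedSolOne b β S ε c u₀ q₀ u_m u v w q) (hb : 0 < b) (hc : 0 < c)
    (hδ : 0 < δ) (hS0 : ∀ x, 0 < S x) (hS1 : ∀ x, S x < 1) (hq : ∀ t, q t ∈ Ioo 0 1)
    (hg : ∀ x ∈ Icc u_m 1, 2 * δ ≤ x - qNullcline β S x * S x) {t : ℝ}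
    (hw : ∀ s < t, 0 < w s) (hψt : 1 < v t ∨ q t - qNullcline β S (u t) < δ) : 0 < w t := by
  by_contra! hwt
  have hd := (hp.sol t).2.2.1.nonpos_of_forall_lt_le fun s hs => hwt.trans (hw s hs).le
  suffices 0 < v t - q t * S (u t) from (mul_pos (pow_pos hb 2) this).not_ge hd
  rcases le_or_gt (v t) 1 with hvt | hvt
  · have ht : 0 < t := by
      by_contra! ht
      exact (hp.w_pos t ht).not_ge hwt
    have hum : u_m ≤ u t := hp.u_zero ▸ hp.monotoneOn_u hc hw ht.le self_mem_Iic ht.le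
    have huv := hp.u_lt_v hc hw le_rfl
    exact hδ.trans_le (le_sub_mul_of_le_qNullcline_add (hS0 _) (hS1 _) hδ.le
      (hg _ ⟨hum, by linarith⟩) huv.le (by linarith [hψt.resolve_left hvt.not_gt]))
  · nlinarith [(hq t).1, (hq t).2, hS1 (u t)]

theorem w_pos_and_sub_qNullcline_lt
    (hp : NormalizedSolOne b β S ε c u₀ (qNullcline β S u₀) u_m u v w q) (hb : 0 < b)
    (hc : 0 < c) (hεc : 0 ≤ ε / c) (hδ : 0 < δ) (hβ : 0 ≤ β) (hS0 : ∀ x, 0 < S x)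
    (hS1 : ∀ x, S x < 1) (hq : ∀ t, q t ∈ Ioo 0 1) (hQ : Differentiable ℝ (qNullcline β S))
    (hg : ∀ x ∈ Icc u_m 1, 2 * δ ≤ x - qNullcline β S x * S x)
    (hL : ∀ x ∈ Icc u₀ 1, |deriv (qNullcline β S) x| ≤ L)
    (hM : L * √(2 * b ^ 2 * (1 - u₀)) < ε / c * δ) :
    ∀ t, 0 < w t ∧ (1 < v t ∨ q t - qNullcline β S (u t) < δ) := by
  have hψ_lim : Tendsto (fun t => q t - qNullcline β S (u t)) atBot (𝓝 0) := by
    simpa using hp.tendsto_atBot_components.2.2.2.sub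
      ((hQ.continuous.tendsto u₀).comp hp.tendsto_atBot_components.1)
  have hopen : IsOpen {t | 0 < w t ∧ (1 < v t ∨ q t - qNullcline β S (u t) < δ)} :=
    (isOpen_lt continuous_const hp.sol.continuous_w).inter
      ((isOpen_lt continuous_const hp.sol.continuous_v).union
        (isOpen_lt (hp.sol.continuous_q.sub (hQ.continuous.comp hp.sol.continuous_u))
          continuous_const))
  refine forall_of_isOpen_of_eventually_atBot hopen
    ((eventually_atBot.2 ⟨0, hp.w_pos⟩).and ((hψ_lim.eventually (gt_mem_nhds hδ)).mono
      fun _ h => Or.inr h)) fun t hprior => ?_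
  have hψt := hp.sub_qNullcline_lt_step hc hεc hδ hβ hS0 hq hQ hL hM (fun s hs => (hprior s hs).1)
    fun s hs => (hprior s hs).2
  exact ⟨hp.w_pos_step hb hc hδ hS0 hS1 hq hg (fun s hs => (hprior s hs).1) hψt, hψt⟩

theorem exists_one_lt_v (hp : NormalizedSolOne b β S ε c u₀ q₀ u_m u v w q) (hb : 0 < b)
    (hc : 0 < c) (hδ : 0 < δ) (hS0 : ∀ x, 0 < S x) (hS1 : ∀ x, S x < 1)
    (hq : ∀ t, q t ∈ Ioo 0 1) (hg : ∀ x ∈ Icc u_m 1, 2 * δ ≤ x - qNullcline β S x * S x)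
    (hinv : ∀ t, 0 < w t ∧ (1 < v t ∨ q t - qNullcline β S (u t) < δ)) : ∃ t, 1 < v t := by
  by_contra! hv1
  have hw : ∀ {T : ℝ}, ∀ s < T, 0 < w s := fun s _ => (hinv s).1
  have hforcing : ∀ t ≥ 0, b ^ 2 * δ ≤ b ^ 2 * (v t - q t * S (u t)) := fun t ht => by
    have hum : u_m ≤ u t := hp.u_zero ▸ hp.monotoneOn_u hc hw ht self_mem_Iic ht
    refine mul_le_mul_of_nonneg_left (le_sub_mul_of_le_qNullcline_add (hS0 _) (hS1 _) hδ.le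
      (hg _ ⟨hum, ?_⟩) (hp.u_lt_v hc hw le_rfl).le ?_) (sq_nonneg b)
    · linarith [hp.u_lt_v hc hw (T := t) le_rfl, hv1 t]
    · linarith [(hinv t).2.resolve_left (hv1 t).not_gt]
  obtain ⟨t, -, ht⟩ := exists_lt_of_pos_le_hasDerivAt (fun t => (hp.sol t).2.2.1)
    (mul_pos (pow_pos hb 2) hδ) hforcing √(2 * b ^ 2 * (1 - u₀))
  exact ht.not_ge (hp.w_le_sqrt hS0 hq hw (T := t) (fun s _ => hv1 s) le_rfl)

theorem u_lt_v_and_exists_one_lt_u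
    (hp : NormalizedSolOne b β S ε c u₀ (qNullcline β S u₀) u_m u v w q) (hb : 0 < b)
    (hβ : 0 < β) (hc : 0 < c) (hεc : 0 < ε / c) (hS0 : ∀ x, 0 < S x) (hS1 : ∀ x, S x < 1)
    (hQ : Differentiable ℝ (qNullcline β S)) (hδ : 0 < δ)
    (hg : ∀ x ∈ Icc u_m 1, 2 * δ ≤ x - qNullcline β S x * S x)
    (hL : ∀ x ∈ Icc u₀ 1, |deriv (qNullcline β S) x| ≤ L)
    (hM : L * √(2 * b ^ 2 * (1 - u₀)) < ε / c * δ) : (∀ t, u t < v t) ∧ ∃ t, 1 < u t := by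
  have hq := hp.sol.q_mem_Ioo hβ hS0 hεc hp.tendsto_atBot_components.2.2.2
    (qNullcline_mem_Ioo (mul_pos hβ (hS0 u₀)))
  have hinv := hp.w_pos_and_sub_qNullcline_lt hb hc hεc.le hδ hβ.le hS0 hS1 hq hQ hg hL hM
  have hw : ∀ t, 0 < w t := fun t => (hinv t).1
  exact ⟨fun t => hp.u_lt_v hc (T := t) (fun s _ => hw s) le_rfl,
    hp.sol.exists_one_lt_u hc hS1 hq hw (hp.exists_one_lt_v hb hc hδ hS0 hS1 hq hg hinv)⟩

end NormalizedSolOne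

theorem exists_two_mul_le_sub_qNullcline {β u₀ q₀ u_m : ℝ} {S : ℝ → ℝ} (hS : Continuous S)
    (hβ : 0 ≤ β) (hS0 : ∀ x, 0 < S x) (hS1 : ∀ x, S x < 1)
    (hC1 : ∀ u q : ℝ, u = q * S u → q = 1 / (1 + β * S u) → u = u₀ ∧ q = q₀)
    (hlt : u₀ < u_m) : ∃ δ > 0, ∀ x ∈ Icc u_m 1, 2 * δ ≤ x - qNullcline β S x * S x := by
  have hQ : Continuous (qNullcline β S) :=
    (continuous_const.add (continuous_const.mul hS)).inv₀ fun x =>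
      (show 0 < 1 + β * S x by linarith [mul_nonneg hβ (hS0 x).le]).ne'
  have hg : Continuous fun x => x - qNullcline β S x * S x := continuous_id.sub (hQ.mul hS)
  have hpos : ∀ x ∈ Icc u_m 1, 0 < x - qNullcline β S x * S x := by
    intro x hx
    by_contra! hle
    have hQ1 : qNullcline β S 1 ≤ 1 :=
      inv_le_one_of_one_le₀ (by linarith [mul_nonneg hβ (hS0 1).le])
    obtain ⟨y, hy, hy0⟩ := intermediate_value_Icc hx.2 hg.continuousOn
      ⟨hle, by nlinarith [hS0 1, hS1 1]⟩
    have := (hC1 y (qNullcline β S y) (by linarith [hy0]) (one_div _).symm).1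
    linarith [hy.1, hx.1]
  obtain ⟨m, hm, hmg⟩ := isCompact_Icc.exists_forall_le' hg.continuousOn hpos
  exact ⟨m / 2, half_pos hm, fun x hx => by linarith [hmg x hx]⟩

theorem small_c_large_eps_over_c_no_pulse_general
    (b β u₀ q₀ u_m : ℝ) (S : ℝ → ℝ)
    (hb : 0 < b) (hβ : 0 < β)
    (hS : ContDiff ℝ 1 S)
    (hSpos : ∀ x : ℝ, 0 < S x) (hSlt : ∀ x : ℝ, S x < 1)
    -- (C1): unique equilibrium p₀ = (u₀,u₀,0,q₀)
    (hq₀ : q₀ = 1 / (1 + β * S u₀))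
    (hC1 : ∀ u q : ℝ, u = q * S u → q = 1 / (1 + β * S u) → u = u₀ ∧ q = q₀)
    -- (C3): h(u) = q₀ has exactly three solutions u₀ < u_m < uP
    (hlt₁ : u₀ < u_m) :
    ∃ chat M : ℝ, 0 < chat ∧ 0 < M ∧
      (∀ ε c : ℝ, 0 < ε → 0 < c → c < chat → M < ε / c →
        ∀ u v w q : ℝ → ℝ,
          SolOne b β S ε c u v w q → Nonconst4 u v w q →
          Tendsto (fun t => (u t, v t, w t, q t)) atBot (𝓝 (u₀, u₀, 0, q₀)) →
          u 0 = u_m → (∀ t : ℝ, t ≤ 0 → 0 < w t) →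
          (∀ t : ℝ, u t < v t) ∧ (∃ t : ℝ, 1 < u t)) ∧
      (∀ ε c : ℝ, 0 < ε → 0 < c → c < chat →
        (∃ u v w q : ℝ → ℝ,
          SolOne b β S ε c u v w q ∧ Nonconst4 u v w q ∧
          Tendsto (fun t => (u t, v t, w t, q t)) atBot (𝓝 (u₀, u₀, 0, q₀)) ∧
          Tendsto (fun t => (u t, v t, w t, q t)) atTop (𝓝 (u₀, u₀, 0, q₀)) ∧
          u 0 = u_m ∧ (∀ t : ℝ, t ≤ 0 → 0 < w t)) →
        ε / c ≤ M) := by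
  obtain rfl : q₀ = qNullcline β S u₀ := hq₀.trans (one_div _)
  have hQ := contDiff_qNullcline hS fun x => (mul_pos hβ (hSpos x)).le
  obtain ⟨δ, hδ, hg⟩ := exists_two_mul_le_sub_qNullcline hS.continuous hβ.le hSpos hSlt hC1 hlt₁
  obtain ⟨L, hL⟩ := isCompact_Icc.exists_bound_of_continuousOn (s := Icc u₀ 1)
    (hQ.continuous_deriv le_rfl).continuousOn
  set W := √(2 * b ^ 2 * (1 - u₀))
  have key : ∀ ε c, 0 < ε → 0 < c → |L| * W / δ + 1 < ε / c → ∀ u v w q,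
      NormalizedSolOne b β S ε c u₀ (qNullcline β S u₀) u_m u v w q →
      (∀ t, u t < v t) ∧ ∃ t, 1 < u t := fun ε c hε hc hM u v w q hp =>
    hp.u_lt_v_and_exists_one_lt_u hb hβ hc (div_pos hε hc) hSpos hSlt
      (hQ.differentiable one_ne_zero) hδ hg (fun x hx => (hL x hx).trans (le_abs_self L))
      (by rw [← div_lt_iff₀ hδ]; linarith)
  refine ⟨1, |L| * W / δ + 1, one_pos, by positivity,
    fun ε c hε hc _ hM u v w q hsol _ hbot hu0 hw0 =>
      key ε c hε hc hM u v w q ⟨hsol, hbot, hu0, hw0⟩, ?_⟩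
  rintro ε c hε hc - ⟨u, v, w, q, hsol, -, hbot, htop, hu0, hw0⟩
  by_contra! hM
  have huv := (key ε c hε hc hM u v w q ⟨hsol, hbot, hu0, hw0⟩).1
  have hu_mono : Monotone u := monotone_of_hasDerivAt_nonneg (fun t => (hsol t).1) fun t =>
    div_nonneg (sub_nonneg.2 (huv t).le) hc.le
  have hu_top : Tendsto u atTop (𝓝 u₀) := ((Prod.tendsto_iff _ _).1 htop).1
  have : u_m ≤ u₀ := ge_of_tendsto hu_top (eventually_atTop.2 ⟨0, fun t ht => hu0 ▸ hu_mono ht⟩)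
  linarith

/-- Lemma 10 of the paper. -/
theorem small_c_large_eps_over_c_no_pulse
    (b β u₀ q₀ u_m uP u_knee : ℝ) (S : ℝ → ℝ)
    (hb : 0 < b) (hβ : 0 < β)
    (hS : ContDiff ℝ 1 S)
    (hS' : ∀ x : ℝ, 0 < deriv S x)
    (hSpos : ∀ x : ℝ, 0 < S x) (hSlt : ∀ x : ℝ, S x < 1)
    -- (C1): unique equilibrium p₀ = (u₀,u₀,0,q₀)
    (hq₀ : q₀ = 1 / (1 + β * S u₀)) (hu₀ : u₀ = q₀ * S u₀)
    (hC1 : ∀ u q : ℝ, u = q * S u → q = 1 / (1 + β * S u) → u = u₀ ∧ q = q₀)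
    -- (C2): h(u) = u/S(u) has one local max then one local min (at u_knee), no other critical points
    (hC2 : ∃ u_max : ℝ, u_max < u_knee ∧ IsLocalMax (fun x : ℝ => x / S x) u_max ∧
      IsLocalMin (fun x : ℝ => x / S x) u_knee ∧
      ∀ x : ℝ, deriv (fun y : ℝ => y / S y) x = 0 → x = u_max ∨ x = u_knee)
    -- (C3): h(u) = q₀ has exactly three solutions u₀ < u_m < uP
    (hlt₁ : u₀ < u_m) (hlt₂ : u_m < uP)
    (hC3 : ∀ x : ℝ, x / S x = q₀ ↔ x = u₀ ∨ x = u_m ∨ x = uP)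
    -- (C4)
    (hC4 : 0 < ∫ x in u₀..uP, (q₀ * S x - x)) :
    ∃ chat M : ℝ, 0 < chat ∧ 0 < M ∧
      (∀ ε c : ℝ, 0 < ε → 0 < c → c < chat → M < ε / c →
        ∀ u v w q : ℝ → ℝ,
          SolOne b β S ε c u v w q → Nonconst4 u v w q →
          Tendsto (fun t => (u t, v t, w t, q t)) atBot (𝓝 (u₀, u₀, 0, q₀)) →
          u 0 = u_m → (∀ t : ℝ, t ≤ 0 → 0 < w t) →
          (∀ t : ℝ, u t < v t) ∧ (∃ t : ℝ, 1 < u t)) ∧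
      (∀ ε c : ℝ, 0 < ε → 0 < c → c < chat →
        (∃ u v w q : ℝ → ℝ,
          SolOne b β S ε c u v w q ∧ Nonconst4 u v w q ∧
          Tendsto (fun t => (u t, v t, w t, q t)) atBot (𝓝 (u₀, u₀, 0, q₀)) ∧
          Tendsto (fun t => (u t, v t, w t, q t)) atTop (𝓝 (u₀, u₀, 0, q₀)) ∧
          u 0 = u_m ∧ (∀ t : ℝ, t ≤ 0 → 0 < w t)) →
        ε / c ≤ M) :=
  small_c_large_eps_over_c_no_pulse_general b β u₀ q₀ u_m S hb hβ hS hSpos hSlt hq₀ hC1 hlt₁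
end
end

section
/- For any ε ≥ 0 and c > 0, the open regions {(u,v,w,q) ∈ ℝ⁴ : v < 0, w < 0, 1/(1+β) < q < 1} and {(u,v,w,q) ∈ ℝ⁴ : v > 1, w > 0, 1/(1+β) < q < 1} are positively invariant for system (1): if a solution p of (1) lies in one of these regions at some time t₀, then p(t) lies in the same region for all t ≥ t₀. -/
open Filter Topology

noncomputable section

/-! The bounds on `q` decouple from the rest: at `q = 1/(1+β)` and at `q = 1` the `q`-equation
points strictly into the interval, since `0 < S < 1`. Given them, the forcing `m = q S(u)` of
the oscillator `v'' = b² (v − m)` lies in `(0, 1)`, so while `w < 0` the value `v` decreases and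
stays negative, which in turn makes `w' < 0` at any point where `w` would reach `0`; the region
`v > 1, w > 0` is the mirror image under `(v, w, m) ↦ (1 − v, −w, 1 − m)`. Each of these is a
first-exit-time argument: at the first time a strict inequality failed, the derivative would
have to point outward. -/

open Set

theorem Ici_subset_of_isOpen_of_forall_Ico_subset {U : Set ℝ} {t₀ : ℝ} (hU : IsOpen U)
    (h₀ : t₀ ∈ U) (hstep : ∀ T, t₀ < T → Ico t₀ T ⊆ U → T ∈ U) : Ici t₀ ⊆ U := by
  have mem_of_Ico_subset : ∀ T, t₀ ≤ T → Ico t₀ T ⊆ U → T ∈ U := fun T hT hTU ↦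
    hT.eq_or_lt.elim (fun h ↦ h ▸ h₀) (hstep T · hTU)
  set s := {x | Ico t₀ x ⊆ U}
  have hs : s = ⋂ y ∈ Ici t₀ \ U, Iic y := by
    ext x
    simp only [s, mem_ofPred_eq, mem_iInter, mem_Iic, subset_def, mem_Ico, Set.mem_sdiff]
    exact ⟨fun h y hy ↦ not_lt.1 fun hxy ↦ hy.2 (h y ⟨hy.1, hxy⟩),
      fun h y hy ↦ by_contra fun hyU ↦ (h y ⟨hy.1, hyU⟩).not_gt hy.2⟩
  intro t ht
  have hs_closed : IsClosed (s ∩ Icc t₀ t) :=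
    (hs ▸ isClosed_biInter fun _ _ ↦ isClosed_Iic).inter isClosed_Icc
  refine mem_of_Ico_subset t ht
    (hs_closed.Icc_subset_of_forall_mem_nhdsWithin (by simp [s]) ?_ ⟨ht, le_rfl⟩)
  rintro x ⟨hxs, hx, -⟩
  obtain ⟨m, hxm, hm⟩ := mem_nhdsGE_iff_exists_Ico_subset.1
    (mem_nhdsWithin_of_mem_nhds (hU.mem_nhds (mem_of_Ico_subset x hx hxs)))
  refine mem_of_superset (Ioo_mem_nhdsGT hxm) fun y hy z hz ↦ ?_
  rcases lt_or_ge z x with hzx | hxz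
  · exact hxs ⟨hz.1, hzx⟩
  · exact hm ⟨hxz, hz.2.trans hy.2⟩

theorem HasDerivAt.lt_apply_of_forall_Ioo {f : ℝ → ℝ} {f' a s T : ℝ} (hf : HasDerivAt f f' T)
    (hsT : s < T) (hlt : ∀ t ∈ Ioo s T, a < f t) (hcontact : f T = a → 0 < f') : a < f T := by
  have hle : a ≤ f T :=
    ge_of_tendsto (hf.continuousAt.tendsto.mono_left nhdsWithin_le_nhds)
      (mem_of_superset (Ioo_mem_nhdsLT hsT) fun t ht ↦ (hlt t ht).le)
  refine hle.lt_of_ne fun hT ↦ ?_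
  have hslope : Tendsto (slope f T) (𝓝[<] T) (𝓝 f') :=
    (hasDerivAt_iff_tendsto_slope.1 hf).mono_left (nhdsWithin_mono _ fun _ h ↦ ne_of_lt h)
  have : f' ≤ 0 := le_of_tendsto hslope <| mem_of_superset (Ioo_mem_nhdsLT hsT) fun t ht ↦ by
    show slope f T t ≤ 0
    rw [slope_def_field]
    exact div_nonpos_of_nonneg_of_nonpos (by linarith [hlt t ht]) (by linarith [ht.2])
  linarith [hcontact hT.symm]

theorem HasDerivAt.apply_lt_of_forall_Ioo {f : ℝ → ℝ} {f' a s T : ℝ} (hf : HasDerivAt f f' T)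
    (hsT : s < T) (hlt : ∀ t ∈ Ioo s T, f t < a) (hcontact : f T = a → f' < 0) : f T < a :=
  neg_lt_neg_iff.1 <| hf.neg.lt_apply_of_forall_Ioo hsT (fun t ht ↦ neg_lt_neg (hlt t ht))
    fun h ↦ neg_pos.2 (hcontact (neg_inj.1 h))

theorem relaxation_mem_Ioo {k β : ℝ} {q σ : ℝ → ℝ} (hk : 0 ≤ k) (hβ : 0 < β)
    (hσ₀ : ∀ t, 0 < σ t) (hσ₁ : ∀ t, σ t < 1)
    (hq : ∀ t, HasDerivAt q (k * (1 - q t - β * (q t * σ t))) t) {t₀ : ℝ}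
    (h₀ : q t₀ ∈ Ioo (1 / (1 + β)) 1) :
    ∀ t, t₀ ≤ t → q t ∈ Ioo (1 / (1 + β)) 1 := by
  rcases hk.eq_or_lt with rfl | hk
  -- for `k = 0` the boundary is not crossed transversally, but then `q` is constant
  · have hconst : ∀ t, q t = q t₀ := fun t ↦
      is_const_of_deriv_eq_zero (fun t ↦ (hq t).differentiableAt)
        (fun t ↦ by simpa using (hq t).deriv) t t₀
    exact fun t _ ↦ hconst t ▸ h₀
  have hqc : Continuous q := continuous_iff_continuousAt.2 fun t ↦ (hq t).continuousAt
  refine fun t ht ↦ Ici_subset_of_isOpen_of_forall_Ico_subset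
    ((isOpen_lt continuous_const hqc).inter (isOpen_lt hqc continuous_const)) h₀
    (fun T hT hTU ↦ ⟨?_, ?_⟩) ht
  · refine (hq T).lt_apply_of_forall_Ioo hT (fun t ht ↦ (hTU ⟨ht.1.le, ht.2⟩).1) fun hqT ↦ ?_
    have : 1 - q T - β * (q T * σ T) = β * (1 - σ T) / (1 + β) := by
      rw [hqT]; field_simp; ring
    rw [this]
    exact mul_pos hk (div_pos (mul_pos hβ (sub_pos.2 (hσ₁ T))) (by linarith))
  · refine (hq T).apply_lt_of_forall_Ioo hT (fun t ht ↦ (hTU ⟨ht.1.le, ht.2⟩).2) fun hqT ↦ ?_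
    rw [hqT]
    nlinarith [mul_pos hk (mul_pos hβ (hσ₀ T))]

theorem neg_of_hasDerivAt_forced_oscillator {κ : ℝ} (hκ : 0 < κ) {v w m : ℝ → ℝ}
    (hv : ∀ t, HasDerivAt v (w t) t) (hw : ∀ t, HasDerivAt w (κ * (v t - m t)) t) {t₀ : ℝ}
    (hm : ∀ t, t₀ ≤ t → 0 ≤ m t) (h₀ : v t₀ < 0 ∧ w t₀ < 0) :
    ∀ t, t₀ ≤ t → v t < 0 ∧ w t < 0 := by
  have hvc : Continuous v := continuous_iff_continuousAt.2 fun t ↦ (hv t).continuousAt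
  have hwc : Continuous w := continuous_iff_continuousAt.2 fun t ↦ (hw t).continuousAt
  refine fun t ht ↦ Ici_subset_of_isOpen_of_forall_Ico_subset
    ((isOpen_lt hvc continuous_const).inter (isOpen_lt hwc continuous_const)) h₀
    (fun T hT hTU ↦ ?_) ht
  have hv_anti : AntitoneOn v (Icc t₀ T) := by
    refine antitoneOn_of_deriv_nonpos (convex_Icc t₀ T) hvc.continuousOn
      (fun x _ ↦ (hv x).differentiableAt.differentiableWithinAt) fun x hx ↦ ?_
    rw [interior_Icc] at hx
    rw [(hv x).deriv]
    exact (hTU ⟨hx.1.le, hx.2⟩).2.le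
  have hvT : v T < 0 :=
    (hv_anti (left_mem_Icc.2 hT.le) (right_mem_Icc.2 hT.le) hT.le).trans_lt h₀.1
  refine ⟨hvT, (hw T).apply_lt_of_forall_Ioo hT (fun t ht ↦ (hTU ⟨ht.1.le, ht.2⟩).2)
    fun _ ↦ mul_neg_of_pos_of_neg hκ ?_⟩
  linarith [hm T hT.le]

theorem one_lt_of_hasDerivAt_forced_oscillator {κ : ℝ} (hκ : 0 < κ) {v w m : ℝ → ℝ}
    (hv : ∀ t, HasDerivAt v (w t) t) (hw : ∀ t, HasDerivAt w (κ * (v t - m t)) t) {t₀ : ℝ}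
    (hm : ∀ t, t₀ ≤ t → m t ≤ 1) (h₀ : 1 < v t₀ ∧ 0 < w t₀) :
    ∀ t, t₀ ≤ t → 1 < v t ∧ 0 < w t := by
  -- `(1 - v, -w)` solves the same system with forcing `1 - m`
  have hw' : ∀ t, HasDerivAt (fun t ↦ -w t) (κ * ((1 - v t) - (1 - m t))) t := fun t ↦
    (hw t).neg.congr_deriv (by ring)
  have := neg_of_hasDerivAt_forced_oscillator hκ (fun t ↦ (hv t).const_sub 1) hw'
    (fun t ht ↦ sub_nonneg.2 (hm t ht)) ⟨by linarith [h₀.1], by linarith [h₀.2]⟩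
  exact fun t ht ↦ ⟨by linarith [(this t ht).1], by linarith [(this t ht).2]⟩

theorem invariant_regions_general
    (b β : ℝ) (S : ℝ → ℝ)
    (hb : 0 < b) (hβ : 0 < β)
    (hSpos : ∀ x : ℝ, 0 < S x) (hSlt : ∀ x : ℝ, S x < 1)
    (ε c : ℝ) (hε : 0 ≤ ε) (hc : 0 < c)
    (u v w q : ℝ → ℝ) (hp : SolOne b β S ε c u v w q) (t₀ : ℝ) :
    ((v t₀ < 0 ∧ w t₀ < 0 ∧ 1 / (1 + β) < q t₀ ∧ q t₀ < 1) →
      ∀ t : ℝ, t₀ ≤ t → v t < 0 ∧ w t < 0 ∧ 1 / (1 + β) < q t ∧ q t < 1) ∧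
    ((1 < v t₀ ∧ 0 < w t₀ ∧ 1 / (1 + β) < q t₀ ∧ q t₀ < 1) →
      ∀ t : ℝ, t₀ ≤ t → 1 < v t ∧ 0 < w t ∧ 1 / (1 + β) < q t ∧ q t < 1) := by
  have hv t := (hp t).2.1
  have hw t := (hp t).2.2.1
  have hq_mem := relaxation_mem_Ioo (div_nonneg hε hc.le) hβ (fun t ↦ hSpos (u t))
    (fun t ↦ hSlt (u t)) (fun t ↦ (hp t).2.2.2) (t₀ := t₀)
  have hforcing (hq₀ : 1 / (1 + β) < q t₀ ∧ q t₀ < 1) (t : ℝ) (ht : t₀ ≤ t) :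
      0 < q t * S (u t) ∧ q t * S (u t) < 1 := by
    obtain ⟨hq_low, hq_high⟩ := hq_mem hq₀ t ht
    have hq_pos : 0 < q t := lt_trans (by positivity) hq_low
    exact ⟨mul_pos hq_pos (hSpos (u t)), by nlinarith [hSpos (u t), hSlt (u t)]⟩
  constructor
  · rintro ⟨hv₀, hw₀, hq₀⟩ t ht
    exact and_assoc.1 ⟨neg_of_hasDerivAt_forced_oscillator (pow_pos hb 2) hv hw
      (fun t ht ↦ (hforcing hq₀ t ht).1.le) ⟨hv₀, hw₀⟩ t ht, hq_mem hq₀ t ht⟩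
  · rintro ⟨hv₀, hw₀, hq₀⟩ t ht
    exact and_assoc.1 ⟨one_lt_of_hasDerivAt_forced_oscillator (pow_pos hb 2) hv hw
      (fun t ht ↦ (hforcing hq₀ t ht).2.le) ⟨hv₀, hw₀⟩ t ht, hq_mem hq₀ t ht⟩

/-- Proposition 1 of the paper: two positively invariant regions. -/
theorem invariant_regions
    (b β : ℝ) (S : ℝ → ℝ)
    (hb : 0 < b) (hβ : 0 < β)
    (hS : ContDiff ℝ 1 S)
    (hS' : ∀ x : ℝ, 0 < deriv S x)
    (hSpos : ∀ x : ℝ, 0 < S x) (hSlt : ∀ x : ℝ, S x < 1)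
    (ε c : ℝ) (hε : 0 ≤ ε) (hc : 0 < c)
    (u v w q : ℝ → ℝ) (hp : SolOne b β S ε c u v w q) (t₀ : ℝ) :
    ((v t₀ < 0 ∧ w t₀ < 0 ∧ 1 / (1 + β) < q t₀ ∧ q t₀ < 1) →
      ∀ t : ℝ, t₀ ≤ t → v t < 0 ∧ w t < 0 ∧ 1 / (1 + β) < q t ∧ q t < 1) ∧
    ((1 < v t₀ ∧ 0 < w t₀ ∧ 1 / (1 + β) < q t₀ ∧ q t₀ < 1) →
      ∀ t : ℝ, t₀ ≤ t → 1 < v t ∧ 0 < w t ∧ 1 / (1 + β) < q t ∧ q t < 1) :=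
  invariant_regions_general b β S hb hβ hSpos hSlt ε c hε hc u v w q hp t₀
end
end

section
/- Let ε > 0 and c > 0, and let p = (u,v,w,q) be a nonconstant solution of system (1) with lim_{t→−∞} p(t) = p₀ such that, for all sufficiently negative t, u₀ < u(t) < v(t), w(t) > 0, q(t) < q₀, and q'(t) < 0. Then there exists τ ∈ ℝ such that w > 0 on (−∞, τ] and u(τ) = u_m. -/
open Filter Topology

noncomputable section

/-!
Since the only critical points of `h(u) = u / S(u)` are a local maximum and a later point
`u_knee`, which Rolle's theorem on `[u_m, u₊]` places beyond `u_m`, `h` has no local minimum in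
`(u₀, u_m)` (a local maximum that is also a local minimum would make `h` locally constant); hence
`h > q₀` there, i.e. `q₀ S(u) < u`. On the region `u₀ < u < v`, `w > 0`, `q < q₀`, `u < u_m` this
makes `u`, `w` increasing, `(v - u)' = w > 0` on the face `v = u`, and `q' < 0` on the face
`q = q₀`, so the orbit cannot leave the region before `u` reaches `u_m`. It does reach `u_m`:
otherwise, from a time `T` in the initial stretch on, `w ≥ w(T) > 0` drives `v` to infinity, and
then `u' = (v - u) / c ≥ 1` drives `u` past `u_m`. The first time with `u = u_m` is `τ`.
-/

open Set

theorem forall_mem_Icc_of_isOpen_of_forall_Ico {P : ℝ → Prop} {a b : ℝ} (hP : IsOpen {t | P t})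
    (ha : P a) (hstep : ∀ t ∈ Ioc a b, (∀ s ∈ Ico a t, P s) → P t) : ∀ t ∈ Icc a b, P t := by
  by_contra! ⟨t, ht, hPt⟩
  obtain ⟨t₁, ⟨ht₁, hPt₁⟩, hleast⟩ :=
    (isCompact_Icc.inter_right hP.isClosed_compl).exists_isLeast ⟨t, ht, hPt⟩
  have hat₁ : a < t₁ := ht₁.1.lt_of_ne fun h => hPt₁ (h ▸ ha)
  refine hPt₁ (hstep t₁ ⟨hat₁, ht₁.2⟩ fun s hs => ?_)
  by_contra hPs
  exact (hleast ⟨⟨hs.1, hs.2.le.trans ht₁.2⟩, hPs⟩).not_gt hs.2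

theorem pos_of_hasDerivAt_of_pos_on_Ioo {g : ℝ → ℝ} {g' a t : ℝ} (hat : a < t)
    (hg : HasDerivAt g g' t) (hpos : ∀ s ∈ Ioo a t, 0 < g s) (hg' : g t = 0 → 0 < g') :
    0 < g t := by
  have hIoo : Ioo a t ∈ 𝓝[<] t := Ioo_mem_nhdsLT hat
  have hnonneg : 0 ≤ g t :=
    ge_of_tendsto (hg.continuousAt.tendsto.mono_left nhdsWithin_le_nhds)
      (eventually_of_mem hIoo fun s hs => (hpos s hs).le)
  refine hnonneg.lt_of_ne fun hzero => ?_
  have hslope : ∀ᶠ s in 𝓝[<] t, 0 < slope g t s :=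
    nhdsLT_le_nhdsNE t <|
      (hasDerivAt_iff_tendsto_slope.mp hg).eventually (eventually_gt_nhds (hg' hzero.symm))
  obtain ⟨s, hs, hsIoo⟩ := (hslope.and hIoo).exists
  exact (neg_of_slope_pos hsIoo.2 hs hzero.symm).not_gt (hpos s hsIoo)

theorem lt_of_hasDerivAt_pos_on_Ioo {f f' : ℝ → ℝ} {a b : ℝ} (hab : a < b)
    (hf : ∀ t, HasDerivAt f (f' t) t) (hf' : ∀ t ∈ Ioo a b, 0 < f' t) : f a < f b := by
  refine strictMonoOn_of_hasDerivWithinAt_pos (convex_Icc a b)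
    (fun t _ => (hf t).continuousAt.continuousWithinAt) (fun t _ => (hf t).hasDerivWithinAt)
    (by simpa only [interior_Icc] using hf') (left_mem_Icc.2 hab.le) (right_mem_Icc.2 hab.le) hab

theorem tendsto_atTop_of_hasDerivAt_ge {f f' : ℝ → ℝ} {C : ℝ} (hC : 0 < C)
    (hf : ∀ t, HasDerivAt f (f' t) t) (hf' : ∀ᶠ t in atTop, C ≤ f' t) :
    Tendsto f atTop atTop := by
  obtain ⟨a, ha⟩ := eventually_atTop.mp hf'
  have hlin : ∀ t ∈ Ici a, f a + C * (t - a) ≤ f t := by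
    intro t ht
    have := (convex_Ici a).mul_sub_le_image_sub_of_le_deriv
      (fun t _ => (hf t).continuousAt.continuousWithinAt)
      (fun t _ => (hf t).differentiableAt.differentiableWithinAt)
      (fun t ht => (hf t).deriv ▸ ha t (interior_subset ht)) a self_mem_Ici t ht ht
    linarith
  refine tendsto_atTop_mono' atTop (eventually_ge_atTop a |>.mono hlin) ?_
  refine tendsto_atTop_add_const_left _ _ (Tendsto.const_mul_atTop hC ?_)
  simpa only [sub_eq_add_neg, id_eq] using tendsto_atTop_add_const_right atTop (-a) tendsto_id

theorem Continuous.exists_first_eq {f : ℝ → ℝ} (hf : Continuous f) {a b y : ℝ} (hab : a ≤ b)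
    (ha : f a < y) (hb : y ≤ f b) : ∃ τ ∈ Ioc a b, f τ = y ∧ ∀ s ∈ Ico a τ, f s < y := by
  obtain ⟨τ, ⟨hτ, hyτ⟩, hleast⟩ :=
    (isCompact_Icc.inter_right (isClosed_le continuous_const hf)).exists_isLeast
      ⟨b, right_mem_Icc.2 hab, hb⟩
  have hbefore : ∀ s ∈ Ico a τ, f s < y := fun s hs =>
    not_le.1 fun hys => (hleast ⟨⟨hs.1, hs.2.le.trans hτ.2⟩, hys⟩).not_gt hs.2
  obtain ⟨s, hs, hfs⟩ := intermediate_value_Icc hτ.1 hf.continuousOn ⟨ha.le, hyτ⟩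
  obtain rfl : s = τ := hs.2.eq_of_not_lt fun hsτ => (hbefore s ⟨hs.1, hsτ⟩).ne hfs
  exact ⟨s, ⟨hτ.1.lt_of_ne fun h => ha.ne (h ▸ hfs), hτ.2⟩, hfs, hbefore⟩

theorem IsLocalMax.not_isLocalMin {f : ℝ → ℝ} {x : ℝ} (hcrit : {y | deriv f y = 0}.Finite)
    (hmax : IsLocalMax f x) : ¬IsLocalMin f x := by
  intro hmin
  have hconst : f =ᶠ[𝓝 x] fun _ => f x := (hmax.and hmin).mono fun y hy => le_antisymm hy.1 hy.2
  obtain ⟨l, r, hx, hsub⟩ :=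
    (hconst.deriv.mono fun y hy => show deriv f y = 0 by rw [hy, deriv_const]).exists_Ioo_subset
  exact Ioo_infinite (hx.1.trans hx.2) (hcrit.subset hsub)

theorem lt_on_Ioo_of_forall_ne_of_not_isLocalMin {f : ℝ → ℝ} {a b y : ℝ}
    (hf : ContinuousOn f (Icc a b)) (ha : f a = y) (hb : f b = y)
    (hne : ∀ x ∈ Ioo a b, f x ≠ y) (hmin : ∀ x ∈ Ioo a b, ¬IsLocalMin f x) :
    ∀ x ∈ Ioo a b, y < f x := by
  intro x hx
  by_contra! hle
  obtain ⟨m, hm, hmin_m⟩ := isCompact_Icc.exists_isMinOn (nonempty_Icc.2 (hx.1.trans hx.2).le) hf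
  have hfm : f m < y := (hmin_m (Ioo_subset_Icc_self hx)).trans_lt (hle.lt_of_ne (hne x hx))
  have ham : a < m := hm.1.lt_of_ne fun h => hfm.ne (h ▸ ha)
  have hmb : m < b := hm.2.lt_of_ne fun h => hfm.ne (h ▸ hb)
  exact hmin m ⟨ham, hmb⟩ (hmin_m.isLocalMin (Icc_mem_nhds ham hmb))

theorem lt_on_Ioo_of_critical_points_subset_pair {f : ℝ → ℝ} (hf : Continuous f)
    {a k x₀ x₁ x₂ y : ℝ} (hak : a < k) (hmax : IsLocalMax f a)
    (hcrit : ∀ x, deriv f x = 0 → x = a ∨ x = k) (h₁₂ : x₁ < x₂)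
    (h₀ : f x₀ = y) (h₁ : f x₁ = y) (h₂ : f x₂ = y) (hne : ∀ x ∈ Ioo x₀ x₁, f x ≠ y) :
    ∀ x ∈ Ioo x₀ x₁, y < f x := by
  have hfin : {x | deriv f x = 0}.Finite :=
    (toFinite {a, k}).subset fun x hx => by simpa using hcrit x hx
  obtain ⟨c, hc, hdc⟩ := exists_deriv_eq_zero h₁₂ hf.continuousOn (h₁.trans h₂.symm)
  have hx₁k : x₁ < k := (hcrit c hdc).elim (fun h => hc.1.trans (h ▸ hak)) (fun h => h ▸ hc.1)
  refine lt_on_Ioo_of_forall_ne_of_not_isLocalMin hf.continuousOn h₀ h₁ hne fun x hx hmin => ?_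
  rcases hcrit x hmin.deriv_eq_zero with rfl | rfl
  · exact hmax.not_isLocalMin hfin hmin
  · exact (hx.2.trans hx₁k).false

def InRegion (u₀ q₀ : ℝ) (u v w q : ℝ → ℝ) (t : ℝ) : Prop :=
  u₀ < u t ∧ u t < v t ∧ 0 < w t ∧ q t < q₀

section Dynamics

variable {b β ε c u₀ q₀ u_m : ℝ} {S u v w q : ℝ → ℝ}

theorem SolOne.continuous (hp : SolOne b β S ε c u v w q) :
    Continuous u ∧ Continuous v ∧ Continuous w ∧ Continuous q :=
  ⟨continuous_iff_continuousAt.2 fun t => (hp t).1.continuousAt,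
    continuous_iff_continuousAt.2 fun t => (hp t).2.1.continuousAt,
    continuous_iff_continuousAt.2 fun t => (hp t).2.2.1.continuousAt,
    continuous_iff_continuousAt.2 fun t => (hp t).2.2.2.continuousAt⟩

theorem SolOne.isOpen_setOf_inRegion (hp : SolOne b β S ε c u v w q) :
    IsOpen {t | InRegion u₀ q₀ u v w q t} := by
  obtain ⟨hu, hv, hw, hq⟩ := hp.continuous
  exact (isOpen_lt continuous_const hu).inter <| (isOpen_lt hu hv).inter <|
    (isOpen_lt continuous_const hw).inter (isOpen_lt hq continuous_const)

theorem w_rhs_pos (hb : 0 < b) (hSpos : ∀ x, 0 < S x)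
    (hh_gt : ∀ x ∈ Ioo u₀ u_m, q₀ * S x < x) {x y r : ℝ} (hx : x ∈ Ioo u₀ u_m) (hxy : x < y)
    (hr : r < q₀) : 0 < b ^ 2 * (y - r * S x) := by
  have := hh_gt x hx
  have := mul_lt_mul_of_pos_right hr (hSpos x)
  exact mul_pos (pow_pos hb 2) (by linarith)

theorem q_rhs_neg (hβ : 0 < β) (hS₀ : 0 < S u₀) (hS : StrictMono S)
    (hq₀ : q₀ = 1 / (1 + β * S u₀)) {x : ℝ} (hx : u₀ < x) :
    1 - q₀ - β * (q₀ * S x) < 0 := by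
  have hden : 0 < 1 + β * S u₀ := by positivity
  have hq₀pos : 0 < q₀ := hq₀ ▸ by positivity
  have hq₀eq : q₀ * (1 + β * S u₀) = 1 := by rw [hq₀]; field_simp
  nlinarith [mul_pos hβ (mul_pos hq₀pos (sub_pos.2 (hS hx)))]

theorem SolOne.inRegion_of_forall_Ico (hp : SolOne b β S ε c u v w q) (hb : 0 < b)
    (hε : 0 < ε) (hc : 0 < c) (hSpos : ∀ x, 0 < S x)
    (hh_gt : ∀ x ∈ Ioo u₀ u_m, q₀ * S x < x) (hq_rhs : ∀ x, u₀ < x → 1 - q₀ - β * (q₀ * S x) < 0)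
    {T t : ℝ} (hTt : T < t) (hR : ∀ s ∈ Ico T t, InRegion u₀ q₀ u v w q s)
    (hum : ∀ s ∈ Ico T t, u s < u_m) : InRegion u₀ q₀ u v w q t := by
  have hRT := hR T ⟨le_rfl, hTt⟩
  have hR' : ∀ s ∈ Ioo T t, InRegion u₀ q₀ u v w q s ∧ u s < u_m := fun s hs =>
    ⟨hR s (Ioo_subset_Ico_self hs), hum s (Ioo_subset_Ico_self hs)⟩
  have hu : u₀ < u t := hRT.1.trans <| lt_of_hasDerivAt_pos_on_Ioo hTt (fun s => (hp s).1)
    fun s hs => div_pos (sub_pos.2 (hR' s hs).1.2.1) hc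
  have hw : 0 < w t := hRT.2.2.1.trans <| lt_of_hasDerivAt_pos_on_Ioo hTt (fun s => (hp s).2.2.1)
    fun s hs => w_rhs_pos hb hSpos hh_gt ⟨(hR' s hs).1.1, (hR' s hs).2⟩ (hR' s hs).1.2.1
      (hR' s hs).1.2.2.2
  have hv : 0 < v t - u t := pos_of_hasDerivAt_of_pos_on_Ioo (g := fun s => v s - u s) hTt
    ((hp t).2.1.sub (hp t).1)
    (fun s hs => sub_pos.2 (hR' s hs).1.2.1) fun h => by rwa [h, zero_div, sub_zero]
  have hq : 0 < q₀ - q t := pos_of_hasDerivAt_of_pos_on_Ioo (g := fun s => q₀ - q s) hTt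
    ((hp t).2.2.2.const_sub q₀)
    (fun s hs => sub_pos.2 (hR' s hs).1.2.2.2) fun h => by
      rw [← sub_eq_zero.1 h, neg_pos]
      exact mul_neg_of_pos_of_neg (div_pos hε hc) (hq_rhs (u t) hu)
  exact ⟨hu, sub_pos.1 hv, hw, sub_pos.1 hq⟩

theorem SolOne.inRegion_Icc (hp : SolOne b β S ε c u v w q) (hb : 0 < b)
    (hε : 0 < ε) (hc : 0 < c) (hSpos : ∀ x, 0 < S x)
    (hh_gt : ∀ x ∈ Ioo u₀ u_m, q₀ * S x < x) (hq_rhs : ∀ x, u₀ < x → 1 - q₀ - β * (q₀ * S x) < 0)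
    {T τ : ℝ} (hT : InRegion u₀ q₀ u v w q T) (hum : ∀ s ∈ Ico T τ, u s < u_m) :
    ∀ t ∈ Icc T τ, InRegion u₀ q₀ u v w q t :=
  forall_mem_Icc_of_isOpen_of_forall_Ico hp.isOpen_setOf_inRegion hT fun _ ht hR =>
    hp.inRegion_of_forall_Ico hb hε hc hSpos hh_gt hq_rhs ht.1 hR
      fun s hs => hum s ⟨hs.1, hs.2.trans_le ht.2⟩

theorem SolOne.exists_le_u_of_inRegion (hp : SolOne b β S ε c u v w q) (hb : 0 < b)
    (hε : 0 < ε) (hc : 0 < c) (hSpos : ∀ x, 0 < S x)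
    (hh_gt : ∀ x ∈ Ioo u₀ u_m, q₀ * S x < x) (hq_rhs : ∀ x, u₀ < x → 1 - q₀ - β * (q₀ * S x) < 0)
    {T : ℝ} (hT : InRegion u₀ q₀ u v w q T) : ∃ t, T ≤ t ∧ u_m ≤ u t := by
  by_contra! hlt
  have hR : ∀ t, T ≤ t → InRegion u₀ q₀ u v w q t := fun t ht =>
    hp.inRegion_Icc hb hε hc hSpos hh_gt hq_rhs hT (fun s hs => hlt s hs.1) t ⟨ht, le_rfl⟩
  have hw : ∀ t, T ≤ t → w T ≤ w t := fun t ht => by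
    rcases ht.eq_or_lt with rfl | hTt
    · rfl
    refine (lt_of_hasDerivAt_pos_on_Ioo hTt (fun s => (hp s).2.2.1) fun s hs => ?_).le
    have hRs := hR s hs.1.le
    exact w_rhs_pos hb hSpos hh_gt ⟨hRs.1, hlt s hs.1.le⟩ hRs.2.1 hRs.2.2.2
  have hv : Tendsto v atTop atTop := tendsto_atTop_of_hasDerivAt_ge hT.2.2.1 (fun s => (hp s).2.1)
    ((eventually_ge_atTop T).mono hw)
  have hu : Tendsto u atTop atTop := by
    refine tendsto_atTop_of_hasDerivAt_ge one_pos (fun s => (hp s).1) ?_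
    filter_upwards [hv.eventually_ge_atTop (u_m + c), eventually_ge_atTop T] with t hvt hTt
    rw [le_div_iff₀ hc]
    linarith [hlt t hTt]
  obtain ⟨t, hut, hTt⟩ := ((hu.eventually_ge_atTop u_m).and (eventually_ge_atTop T)).exists
  exact (hlt t hTt).not_ge hut

end Dynamics

theorem w_positive_until_u_m_general
    (b β u₀ q₀ u_m uP u_knee : ℝ) (S : ℝ → ℝ)
    (hb : 0 < b) (hβ : 0 < β)
    (hS : ContDiff ℝ 1 S)
    (hS' : ∀ x : ℝ, 0 < deriv S x)
    (hSpos : ∀ x : ℝ, 0 < S x)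
    -- (C1): unique equilibrium p₀ = (u₀,u₀,0,q₀)
    (hq₀ : q₀ = 1 / (1 + β * S u₀))
    -- (C2): h(u) = u/S(u) has one local max then one local min (at u_knee), no other critical points
    (hC2 : ∃ u_max : ℝ, u_max < u_knee ∧ IsLocalMax (fun x : ℝ => x / S x) u_max ∧
      IsLocalMin (fun x : ℝ => x / S x) u_knee ∧
      ∀ x : ℝ, deriv (fun y : ℝ => y / S y) x = 0 → x = u_max ∨ x = u_knee)
    -- (C3): h(u) = q₀ has exactly three solutions u₀ < u_m < uP
    (hlt₁ : u₀ < u_m) (hlt₂ : u_m < uP)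
    (hC3 : ∀ x : ℝ, x / S x = q₀ ↔ x = u₀ ∨ x = u_m ∨ x = uP)
    (ε c : ℝ) (hε : 0 < ε) (hc : 0 < c)
    (u v w q : ℝ → ℝ) (hp : SolOne b β S ε c u v w q)
    (hlim : Tendsto (fun t => (u t, v t, w t, q t)) atBot (𝓝 (u₀, u₀, 0, q₀)))
    (hbehav : ∀ᶠ t in atBot,
      u₀ < u t ∧ u t < v t ∧ 0 < w t ∧ q t < q₀ ∧ deriv q t < 0) :
    ∃ τ : ℝ, (∀ t : ℝ, t ≤ τ → 0 < w t) ∧ u τ = u_m := by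
  obtain ⟨u_max, hmk, hmax, -, hcrit⟩ := hC2
  have hcont : Continuous fun x => x / S x :=
    continuous_id.div hS.continuous fun x => (hSpos x).ne'
  have hh_gt : ∀ x ∈ Ioo u₀ u_m, q₀ * S x < x := fun x hx => by
    have := lt_on_Ioo_of_critical_points_subset_pair hcont hmk hmax hcrit hlt₂
      ((hC3 u₀).2 (Or.inl rfl)) ((hC3 u_m).2 (Or.inr (Or.inl rfl)))
      ((hC3 uP).2 (Or.inr (Or.inr rfl)))
      (fun y hy h => by rcases (hC3 y).1 h with h | h | h <;> linarith [hy.1, hy.2]) x hx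
    rwa [lt_div_iff₀ (hSpos x)] at this
  have hq_rhs : ∀ x, u₀ < x → 1 - q₀ - β * (q₀ * S x) < 0 := fun _ =>
    q_rhs_neg hβ (hSpos u₀) (strictMono_of_deriv_pos hS') hq₀
  have hu_lim : Tendsto u atBot (𝓝 u₀) := (continuous_fst.tendsto _).comp hlim
  obtain ⟨T, hT⟩ := eventually_atBot.1 (hbehav.and (hu_lim.eventually (eventually_lt_nhds hlt₁)))
  obtain ⟨⟨hu₀T, huvT, hwT, hqT, -⟩, humT⟩ := hT T le_rfl
  have hRT : InRegion u₀ q₀ u v w q T := ⟨hu₀T, huvT, hwT, hqT⟩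
  obtain ⟨t, hTt, ht⟩ := hp.exists_le_u_of_inRegion hb hε hc hSpos hh_gt hq_rhs hRT
  obtain ⟨τ, -, huτ, hbefore⟩ := hp.continuous.1.exists_first_eq hTt humT ht
  refine ⟨τ, fun s hs => ?_, huτ⟩
  rcases le_total s T with hsT | hTs
  · exact (hT s hsT).1.2.2.1
  · exact (hp.inRegion_Icc hb hε hc hSpos hh_gt hq_rhs hRT hbefore s ⟨hTs, hs⟩).2.2.1

/-- Lemma 2c of the paper. -/
theorem w_positive_until_u_m
    (b β u₀ q₀ u_m uP u_knee : ℝ) (S : ℝ → ℝ)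
    (hb : 0 < b) (hβ : 0 < β)
    (hS : ContDiff ℝ 1 S)
    (hS' : ∀ x : ℝ, 0 < deriv S x)
    (hSpos : ∀ x : ℝ, 0 < S x) (hSlt : ∀ x : ℝ, S x < 1)
    -- (C1): unique equilibrium p₀ = (u₀,u₀,0,q₀)
    (hq₀ : q₀ = 1 / (1 + β * S u₀)) (hu₀ : u₀ = q₀ * S u₀)
    (hC1 : ∀ u q : ℝ, u = q * S u → q = 1 / (1 + β * S u) → u = u₀ ∧ q = q₀)
    -- (C2): h(u) = u/S(u) has one local max then one local min (at u_knee), no other critical points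
    (hC2 : ∃ u_max : ℝ, u_max < u_knee ∧ IsLocalMax (fun x : ℝ => x / S x) u_max ∧
      IsLocalMin (fun x : ℝ => x / S x) u_knee ∧
      ∀ x : ℝ, deriv (fun y : ℝ => y / S y) x = 0 → x = u_max ∨ x = u_knee)
    -- (C3): h(u) = q₀ has exactly three solutions u₀ < u_m < uP
    (hlt₁ : u₀ < u_m) (hlt₂ : u_m < uP)
    (hC3 : ∀ x : ℝ, x / S x = q₀ ↔ x = u₀ ∨ x = u_m ∨ x = uP)
    -- (C4)
    (hC4 : 0 < ∫ x in u₀..uP, (q₀ * S x - x))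
    (ε c : ℝ) (hε : 0 < ε) (hc : 0 < c)
    (u v w q : ℝ → ℝ) (hp : SolOne b β S ε c u v w q)
    (hnc : Nonconst4 u v w q)
    (hlim : Tendsto (fun t => (u t, v t, w t, q t)) atBot (𝓝 (u₀, u₀, 0, q₀)))
    (hbehav : ∀ᶠ t in atBot,
      u₀ < u t ∧ u t < v t ∧ 0 < w t ∧ q t < q₀ ∧ deriv q t < 0) :
    ∃ τ : ℝ, (∀ t : ℝ, t ≤ τ → 0 < w t) ∧ u τ = u_m :=
  w_positive_until_u_m_general b β u₀ q₀ u_m uP u_knee S hb hβ hS hS' hSpos hq₀ hC2 hlt₁ hlt₂ hC3 ε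
    c hε hc u v w q hp hlim hbehav
end
end

section
/- Let ε > 0 and c > 0, and let p = (u,v,w,q) be a nonconstant solution of system (1). Suppose that at some time τ one of the following four sets of conditions holds: (i) u'(τ) = 0, v'(τ) = 0, w'(τ) ≤ 0, q'(τ) ≤ 0, and u(τ) ≥ u₀; (ii) u'(τ) = 0, v'(τ) < 0, w'(τ) = 0, q'(τ) = 0, and u(τ) ≥ u₀; (iii) u'(τ) = 0, v'(τ) ≤ 0, q'(τ) > 0, and u(τ) = u₀; or (iv) u'(τ) = 0, v'(τ) ≤ 0, w'(τ) > 0, q'(τ) ≥ 0, and u(τ) ≥ u₀. Then it is not the case that lim_{t→−∞} p(t) = p₀. -/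
/-!
Suppose `p(t) → p₀` as `t → -∞`. Since `u'(τ) = 0` we have `v(τ) = u(τ)`. Read backwards in time
from `τ`, the quantities `σ (v - u)`, `-σ w`, `σ (v - q S(u))` and `σ (1 - q - β q S(u))` solve a
linear system with nonnegative coefficients (here `q > 0`, which holds because `q(-∞) = q₀ > 0`
and `q' > 0` on `q = 0`), so the backward flow keeps them in the nonpositive orthant. Each of the
four conditions puts them in that orthant at `τ` (`σ = 1` in case (i), `σ = -1` otherwise) with
one of the last three strictly negative; the only exception, in case (i), is an equilibrium
`p(τ)`, which would make `p` constant. The strict sign reaches `-σ w`, which is nonincreasing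
backwards, so `σ v` decreases at least linearly as `t → -∞` and `v` cannot tend to `u₀`.
-/

open Filter Topology

noncomputable section

open Set Matrix

theorem HasDerivAt.nonneg_of_eventually_le_left {f : ℝ → ℝ} {f' x : ℝ} (hf : HasDerivAt f f' x)
    (h : ∀ᶠ y in 𝓝[<] x, f y ≤ f x) : 0 ≤ f' := by
  refine ge_of_tendsto ((hasDerivWithinAt_iff_tendsto_slope' (s := Iio x) (lt_irrefl x)).mp
    hf.hasDerivWithinAt) ?_
  filter_upwards [h, self_mem_nhdsWithin] with y hy hyx
  rw [slope_def_field]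
  exact div_nonneg_of_nonpos (sub_nonpos.mpr hy) (sub_nonpos.mpr (le_of_lt hyx))

theorem HasDerivAt.exists_gt_lt_of_neg {f : ℝ → ℝ} {f' x : ℝ} (hf : HasDerivAt f f' x)
    (hf' : f' < 0) : ∃ y, x < y ∧ f y < f x := by
  obtain ⟨y, hy, hxy⟩ :=
    (hf.hasDerivWithinAt.liminf_right_slope_le hf').and_eventually self_mem_nhdsWithin |>.exists
  refine ⟨y, hxy, ?_⟩
  rw [slope_def_field, div_neg_iff] at hy
  rcases hy with ⟨-, h⟩ | ⟨h, -⟩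
  · exact absurd h (not_lt.mpr (sub_nonneg.mpr (le_of_lt hxy)))
  · linarith

/-- The barrier `η e^{Bs}` with `B > L` grows faster than any component can where it first
meets one of them. -/
theorem lt_exp_mul_of_hasDerivAt_le_mul {ι : Type*} [Finite ι] {c d : ι → ℝ → ℝ} {L T B η : ℝ}
    (hc : ∀ i s, HasDerivAt (c i) (d i s) s)
    (hd : ∀ s ∈ Icc 0 T, ∀ M, 0 < M → (∀ j, c j s ≤ M) → ∀ i, d i s ≤ L * M)
    (h0 : ∀ i, c i 0 ≤ 0) (hLB : L < B) (hη : 0 < η) :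
    ∀ i, ∀ s ∈ Icc 0 T, c i s < η * Real.exp (B * s) := by
  have hcont : ∀ i, Continuous (c i) := fun i =>
    continuous_iff_continuousAt.mpr fun s => (hc i s).continuousAt
  by_contra! hbad
  set A := {s ∈ Icc 0 T | ∃ i, η * Real.exp (B * s) ≤ c i s}
  have hA : IsClosed A := by
    have : A = Icc 0 T ∩ ⋃ i, {s | η * Real.exp (B * s) ≤ c i s} := by ext; simp [A]
    rw [this]
    exact isClosed_Icc.inter (isClosed_iUnion_of_finite fun i =>
      isClosed_le (by fun_prop) (hcont i))
  have hbdd : BddBelow A := ⟨0, fun _ h => h.1.1⟩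
  obtain ⟨⟨hs₀, hsT⟩, i, hi⟩ :=
    hA.csInf_mem (let ⟨i, s, hs, h⟩ := hbad; ⟨s, hs, i, h⟩) hbdd
  set s₀ := sInf A
  have hbelow : ∀ y ∈ Ico 0 s₀, ∀ j, c j y < η * Real.exp (B * y) := by
    intro y hy j
    by_contra! h
    exact (csInf_le hbdd ⟨⟨hy.1, hy.2.le.trans hsT⟩, j, h⟩).not_gt hy.2
  have hpos : 0 < s₀ := by
    refine lt_of_le_of_ne hs₀ fun h => ?_
    simp only [← h, mul_zero, Real.exp_zero, mul_one] at hi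
    linarith [h0 i]
  have hleft : ∀ᶠ y in 𝓝[<] s₀, y ∈ Ico 0 s₀ :=
    mem_of_superset (Ioo_mem_nhdsLT_of_mem ⟨hpos, le_rfl⟩) Ioo_subset_Ico_self
  have hle : ∀ j, c j s₀ ≤ η * Real.exp (B * s₀) := fun j =>
    sub_nonpos.mp <| le_of_tendsto
      (((hcont j).sub (by fun_prop)).tendsto s₀ |>.mono_left nhdsWithin_le_nhds)
      (hleft.mono fun y hy => sub_nonpos.mpr (hbelow y hy j).le)
  have hderiv : HasDerivAt (fun y => c i y - η * Real.exp (B * y))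
      (d i s₀ - B * (η * Real.exp (B * s₀))) s₀ :=
    (hc i s₀).sub <| (((hasDerivAt_id s₀).const_mul B).exp.const_mul η).congr_deriv
      (by simp only [id, mul_one]; ring)
  have := hderiv.nonneg_of_eventually_le_left <| hleft.mono fun y hy => by
    linarith [hbelow y hy i]
  have hM : 0 < η * Real.exp (B * s₀) := by positivity
  nlinarith [hd s₀ ⟨hs₀, hsT⟩ _ hM hle i, mul_pos (sub_pos.mpr hLB) hM]

theorem nonpos_of_hasDerivAt_le_mul {ι : Type*} [Finite ι] {c d : ι → ℝ → ℝ} {L T : ℝ}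
    (hc : ∀ i s, HasDerivAt (c i) (d i s) s)
    (hd : ∀ s ∈ Icc 0 T, ∀ M, 0 < M → (∀ j, c j s ≤ M) → ∀ i, d i s ≤ L * M)
    (h0 : ∀ i, c i 0 ≤ 0) (i : ι) {s : ℝ} (hs : s ∈ Icc 0 T) : c i s ≤ 0 := by
  refine le_of_forall_pos_lt_add fun δ hδ => ?_
  have hB : L < |L| + 1 := (le_abs_self L).trans_lt (lt_add_one _)
  have hexp := Real.exp_pos ((|L| + 1) * s)
  simpa [div_mul_cancel₀ _ hexp.ne'] using
    lt_exp_mul_of_hasDerivAt_le_mul hc hd h0 hB (div_pos hδ hexp) i s hs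

theorem nonpos_of_hasDerivAt_mulVec {ι : Type*} [Fintype ι] {x : ℝ → ι → ℝ}
    {A : ℝ → Matrix ι ι ℝ} (hA : Continuous A) (hA₀ : ∀ s i j, 0 ≤ A s i j)
    (hx : ∀ s, HasDerivAt x (A s *ᵥ x s) s) (h0 : x 0 ≤ 0) {s : ℝ} (hs : 0 ≤ s) : x s ≤ 0 := by
  obtain ⟨L, hL⟩ := isCompact_Icc.exists_bound_of_continuousOn (s := Icc 0 s)
    (f := fun r => ∑ i, ∑ j, A r i j) (by fun_prop)
  refine fun i => nonpos_of_hasDerivAt_le_mul (L := L) (c := fun i r => x r i)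
    (fun i r => hasDerivAt_pi.mp (hx r) i) ?_ h0 i ⟨hs, le_rfl⟩
  intro r hr M hM hxM i
  have hrow : ∑ j, A r i j ≤ ∑ i', ∑ j, A r i' j :=
    Finset.single_le_sum (f := fun i' => ∑ j, A r i' j)
      (fun i' _ => Finset.sum_nonneg fun j _ => hA₀ r i' j) (Finset.mem_univ i)
  calc (A r *ᵥ x r) i = ∑ j, A r i j * x r j := rfl
    _ ≤ ∑ j, A r i j * M :=
      Finset.sum_le_sum fun j _ => mul_le_mul_of_nonneg_left (hxM j) (hA₀ r i j)
    _ = (∑ j, A r i j) * M := (Finset.sum_mul ..).symm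
    _ ≤ L * M := mul_le_mul_of_nonneg_right
      (hrow.trans ((le_abs_self _).trans (hL r hr))) hM.le

theorem tendsto_atBot_of_hasDerivAt_le_neg {f f' : ℝ → ℝ} {a δ : ℝ}
    (hf : ∀ s, HasDerivAt f (f' s) s) (hδ : 0 < δ) (hf' : ∀ s, a ≤ s → f' s ≤ -δ) :
    Tendsto f atTop atBot := by
  have hbound : ∀ s, a ≤ s → f s ≤ f a + -δ * (s - a) := fun s hs => by
    have := (convex_Ici a).image_sub_le_mul_sub_of_deriv_le
      (continuous_iff_continuousAt.mpr fun s => (hf s).continuousAt).continuousOn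
      (fun x _ => (hf x).differentiableAt.differentiableWithinAt)
      (fun x hx => (hf x).deriv ▸ hf' x (interior_subset hx)) a self_mem_Ici s hs hs
    linarith
  refine tendsto_atBot_mono' atTop ((eventually_ge_atTop a).mono hbound) ?_
  exact tendsto_atBot_add_const_left _ _
    ((tendsto_atTop_add_const_right _ (-a) tendsto_id).const_mul_atTop_of_neg (by linarith))

theorem eq_of_hasDerivAt_of_apply_eq_zero {E : Type*} [NormedAddCommGroup E] [NormedSpace ℝ E]
    {F : E → E} {x₀ : E} (hF : ContDiffAt ℝ 1 F x₀) (hx₀ : F x₀ = 0) {p : ℝ → E}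
    (hp : ∀ t, HasDerivAt p (F (p t)) t) {t₀ : ℝ} (ht₀ : p t₀ = x₀) (t : ℝ) : p t = x₀ := by
  obtain ⟨K, s, hs, hlip⟩ := hF.exists_lipschitzOnWith
  have hpc : Continuous p := continuous_iff_continuousAt.mpr fun t => (hp t).continuousAt
  have hopen : IsOpen {t | p t = x₀} := isOpen_iff_mem_nhds.mpr fun t₁ (ht₁ : p t₁ = x₀) => by
    have hps : ∀ᶠ t in 𝓝 t₁, p t ∈ s := hpc.continuousAt.preimage_mem_nhds (ht₁ ▸ hs)
    exact ODE_solution_unique_of_eventually (v := fun _ => F) (s := fun _ => s)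
      (Eventually.of_forall fun _ => hlip) (hps.mono fun t ht => ⟨hp t, ht⟩)
      (Eventually.of_forall fun t => ⟨hx₀ ▸ hasDerivAt_const t x₀, mem_of_mem_nhds hs⟩) ht₁
  have := IsClopen.eq_univ ⟨isClosed_eq hpc continuous_const, hopen⟩ ⟨t₀, ht₀⟩
  exact (this ▸ mem_univ t : t ∈ {t | p t = x₀})

section SystemOne

variable {b β ε c : ℝ} {S : ℝ → ℝ} {u v w q : ℝ → ℝ}

theorem SolOne.continuous_u_s14 (hp : SolOne b β S ε c u v w q) : Continuous u :=
  continuous_iff_continuousAt.mpr fun t => (hp t).1.continuousAt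

theorem SolOne.continuous_q_s14 (hp : SolOne b β S ε c u v w q) : Continuous q :=
  continuous_iff_continuousAt.mpr fun t => (hp t).2.2.2.continuousAt

theorem SolOne.q_pos (hp : SolOne b β S ε c u v w q) (hε : 0 < ε) (hc : 0 < c) {q₀ : ℝ}
    (hq : Tendsto q atBot (𝓝 q₀)) (hq₀ : 0 < q₀) (t : ℝ) : 0 < q t := by
  by_contra! ht
  -- `q' = ε / c > 0` wherever `q = 0`, so `q` cannot have been positive before `t`
  have hle : ∀ s ≤ t, q s ≤ 0 := fun s hs => by
    have := image_le_of_deriv_right_lt_deriv_boundary' (a := 0) (b := t - s)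
      (f := fun r => q (t - r)) (B := fun _ => 0) (B' := fun _ => 0)
      (hp.continuous_q_s14.comp (continuous_sub_left t)).continuousOn
      (fun r _ => ((hp (t - r)).2.2.2.comp_const_sub t r).hasDerivWithinAt)
      (by simpa using ht) continuousOn_const (fun r _ => hasDerivWithinAt_const _ _ _)
      (fun r _ hr => by simp [hr, div_pos hε hc])
    simpa using this ⟨sub_nonneg.mpr hs, le_rfl⟩
  obtain ⟨s, hs, hst⟩ := ((hq.eventually (lt_mem_nhds hq₀)).and (eventually_le_atBot t)).exists
  exact (hle s hst).not_gt hs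

/-- Read backwards in time from `τ`, the signed quantities `σ (v - u)`, `-σ w`, `σ (v - q S(u))`
and `σ (1 - q - β q S(u))` along a solution of (1) solve the cooperative linear system
`x' = backwardMatrix … *ᵥ x`. -/
def backwardCoords (β : ℝ) (S : ℝ → ℝ) (u v w q : ℝ → ℝ) (σ τ s : ℝ) : Fin 4 → ℝ :=
  σ • ![v (τ - s) - u (τ - s), -w (τ - s), v (τ - s) - q (τ - s) * S (u (τ - s)),
    1 - q (τ - s) - β * (q (τ - s) * S (u (τ - s)))]

/-- `a` and `k` stand for `S(u)` and `q S'(u)` at time `τ - s`. -/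
def backwardMatrix (b β ε c a k : ℝ) : Matrix (Fin 4) (Fin 4) ℝ :=
  !![1 / c, 1, 0, 0;
     0, 0, b ^ 2, 0;
     k / c, 1, 0, ε / c * a;
     β * k / c, 0, 0, ε / c * (1 + β * a)]

theorem backwardMatrix_nonneg {b β ε c a k : ℝ} (hβ : 0 ≤ β) (hε : 0 ≤ ε) (hc : 0 ≤ c)
    (ha : 0 ≤ a) (hk : 0 ≤ k) (i j : Fin 4) : 0 ≤ backwardMatrix b β ε c a k i j := by
  fin_cases i <;> fin_cases j <;> simp [backwardMatrix] <;> positivity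

theorem continuous_backwardMatrix (b β ε c : ℝ) :
    Continuous fun p : ℝ × ℝ => backwardMatrix b β ε c p.1 p.2 :=
  continuous_pi fun i => continuous_pi fun j => by
    fin_cases i <;> fin_cases j <;> simp [backwardMatrix] <;> fun_prop

theorem SolOne.hasDerivAt_backwardCoords (hp : SolOne b β S ε c u v w q)
    (hS : Differentiable ℝ S) (σ τ s : ℝ) :
    HasDerivAt (backwardCoords β S u v w q σ τ)
      (backwardMatrix b β ε c (S (u (τ - s))) (q (τ - s) * deriv S (u (τ - s))) *ᵥ
        backwardCoords β S u v w q σ τ s) s := by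
  obtain ⟨hu, hv, hw, hq⟩ := hp (τ - s)
  have hSu : HasDerivAt (fun t => S (u t)) _ (τ - s) := (hS (u (τ - s))).hasDerivAt.comp _ hu
  have hqS := hq.mul hSu
  refine hasDerivAt_pi.mpr fun i => ?_
  fin_cases i <;> [
    refine (((hv.sub hu).comp_const_sub τ s).const_mul σ).congr_deriv ?_;
    refine ((hw.comp_const_sub τ s).neg.const_mul σ).congr_deriv ?_;
    refine (((hv.sub hqS).comp_const_sub τ s).const_mul σ).congr_deriv ?_;
    refine ((((hasDerivAt_const _ 1).sub hq).sub (hqS.const_mul β)).comp_const_sub τ s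
      |>.const_mul σ).congr_deriv ?_] <;>
  · simp [backwardCoords, backwardMatrix, mulVec, dotProduct, Fin.sum_univ_four]
    ring

theorem SolOne.backwardCoords_nonpos (hp : SolOne b β S ε c u v w q) (hS : ContDiff ℝ 1 S)
    (hβ : 0 ≤ β) (hε : 0 ≤ ε) (hc : 0 ≤ c) (hS₀ : ∀ x, 0 ≤ S x) (hS' : ∀ x, 0 ≤ deriv S x)
    (hq : ∀ t, 0 ≤ q t) {σ τ : ℝ} (h0 : backwardCoords β S u v w q σ τ 0 ≤ 0) {s : ℝ}
    (hs : 0 ≤ s) : backwardCoords β S u v w q σ τ s ≤ 0 := by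
  have hak : Continuous fun s => (S (u (τ - s)), q (τ - s) * deriv S (u (τ - s))) := by
    have := hp.continuous_u_s14
    have := hp.continuous_q_s14
    have := hS.continuous
    have := hS.continuous_deriv le_rfl
    fun_prop
  refine nonpos_of_hasDerivAt_mulVec
    (A := fun s => backwardMatrix b β ε c (S (u (τ - s))) (q (τ - s) * deriv S (u (τ - s))))
    ((continuous_backwardMatrix b β ε c).comp hak)
    (fun s => backwardMatrix_nonneg hβ hε hc (hS₀ _) (mul_nonneg (hq _) (hS' _)))
    (hp.hasDerivAt_backwardCoords (hS.differentiable one_ne_zero) σ τ) h0 hs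

theorem SolOne.backwardCoords_zero (hp : SolOne b β S ε c u v w q) (hb : b ≠ 0) (hε : ε ≠ 0)
    (hc : c ≠ 0) (σ τ : ℝ) :
    backwardCoords β S u v w q σ τ 0 = ![c * (σ * deriv u τ), -(σ * deriv v τ),
      σ * deriv w τ / b ^ 2, c / ε * (σ * deriv q τ)] := by
  obtain ⟨hu, hv, hw, hq⟩ := hp τ
  ext i
  fin_cases i <;> simp [backwardCoords, hu.deriv, hv.deriv, hw.deriv, hq.deriv] <;> field_simp

theorem SolOne.exists_backwardCoords_one_neg (hp : SolOne b β S ε c u v w q)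
    (hS : ContDiff ℝ 1 S) (hb : b ≠ 0) (hβ : 0 ≤ β) (hε : 0 < ε) (hc : 0 < c)
    (hS₀ : ∀ x, 0 < S x) (hS' : ∀ x, 0 ≤ deriv S x) (hq : ∀ t, 0 ≤ q t) {σ τ : ℝ}
    (h0 : backwardCoords β S u v w q σ τ 0 ≤ 0)
    (hneg : backwardCoords β S u v w q σ τ 0 1 < 0 ∨ backwardCoords β S u v w q σ τ 0 2 < 0 ∨
      backwardCoords β S u v w q σ τ 0 3 < 0) :
    ∃ s, 0 ≤ s ∧ backwardCoords β S u v w q σ τ s 1 < 0 := by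
  have hx : ∀ s i, HasDerivAt (backwardCoords β S u v w q σ τ · i) _ s := fun s =>
    hasDerivAt_pi.mp (hp.hasDerivAt_backwardCoords (hS.differentiable one_ne_zero) σ τ s)
  have hnp : ∀ s, 0 ≤ s → ∀ i, backwardCoords β S u v w q σ τ s i ≤ 0 := fun s hs i =>
    hp.backwardCoords_nonpos hS hβ hε.le hc.le (fun x => (hS₀ x).le) hS' hq h0 hs i
  replace h0 : ∀ i, backwardCoords β S u v w q σ τ 0 i ≤ 0 := hnp 0 le_rfl
  simp only [backwardMatrix, mulVec, dotProduct, Fin.sum_univ_four] at hx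
  generalize backwardCoords β S u v w q σ τ = x at hx hnp h0 hneg ⊢
  have of_two : ∀ s, 0 ≤ s → x s 2 < 0 → ∃ s', 0 ≤ s' ∧ x s' 1 < 0 := fun s hs h2 => by
    obtain ⟨s', hss', hlt⟩ := (hx s 1).exists_gt_lt_of_neg <| by
      simpa using mul_neg_of_pos_of_neg (pow_two_pos_of_ne_zero hb) h2
    exact ⟨s', hs.trans hss'.le, hlt.trans_le (hnp s hs 1)⟩
  rcases hneg with h1 | h2 | h3
  · exact ⟨0, le_rfl, h1⟩
  · exact of_two 0 le_rfl h2
  -- at `s = 0`, `x₂' = (q S'(u) / c) x₀ + x₁ + (ε / c) S(u) x₃ < 0`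
  obtain ⟨s, hs, hlt⟩ := (hx 0 2).exists_gt_lt_of_neg <| by
    have hk : 0 ≤ q τ * deriv S (u τ) / c := by have := hq τ; have := hS' (u τ); positivity
    have hεS : 0 < ε / c * S (u τ) := by have := hS₀ (u τ); positivity
    simp
    nlinarith [mul_nonpos_of_nonneg_of_nonpos hk (h0 0), mul_neg_of_pos_of_neg hεS h3, h0 1]
  exact of_two s hs.le (hlt.trans_le (h0 2))

theorem SolOne.not_tendsto_atBot_of_backwardCoords (hp : SolOne b β S ε c u v w q)
    (hS : ContDiff ℝ 1 S) (hb : b ≠ 0) (hβ : 0 ≤ β) (hε : 0 < ε) (hc : 0 < c)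
    (hS₀ : ∀ x, 0 < S x) (hS' : ∀ x, 0 ≤ deriv S x) (hq : ∀ t, 0 ≤ q t) {σ τ : ℝ}
    (h0 : backwardCoords β S u v w q σ τ 0 ≤ 0)
    (hneg : backwardCoords β S u v w q σ τ 0 1 < 0 ∨ backwardCoords β S u v w q σ τ 0 2 < 0 ∨
      backwardCoords β S u v w q σ τ 0 3 < 0) (l : ℝ) :
    ¬ Tendsto v atBot (𝓝 l) := by
  intro hv
  obtain ⟨s₁, hs₁, hneg₁⟩ := hp.exists_backwardCoords_one_neg hS hb hβ hε hc hS₀ hS' hq h0 hneg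
  have hx : ∀ s i, HasDerivAt (backwardCoords β S u v w q σ τ · i) _ s := fun s =>
    hasDerivAt_pi.mp (hp.hasDerivAt_backwardCoords (hS.differentiable one_ne_zero) σ τ s)
  have hnp : ∀ s, 0 ≤ s → ∀ i, backwardCoords β S u v w q σ τ s i ≤ 0 := fun s hs i =>
    hp.backwardCoords_nonpos hS hβ hε.le hc.le (fun x => (hS₀ x).le) hS' hq h0 hs i
  have hanti : AntitoneOn (backwardCoords β S u v w q σ τ · 1) (Ici 0) :=
    antitoneOn_of_deriv_nonpos (convex_Ici 0) (HasDerivAt.continuousOn fun s _ => hx s 1)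
      (fun s _ => (hx s 1).differentiableAt.differentiableWithinAt) fun s hs => by
        rw [(hx s 1).deriv]
        simpa [backwardMatrix, mulVec, dotProduct, Fin.sum_univ_four] using
          mul_nonpos_of_nonneg_of_nonpos (sq_nonneg b) (hnp s (interior_subset hs) 2)
  have hσv : ∀ s, HasDerivAt (fun s => σ * v (τ - s)) (backwardCoords β S u v w q σ τ s 1) s :=
    fun s => (((hp (τ - s)).2.1.comp_const_sub τ s).const_mul σ).congr_deriv
      (by simp [backwardCoords])
  have hbot := tendsto_atBot_of_hasDerivAt_le_neg hσv (neg_pos.mpr hneg₁) fun s hs => by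
    simpa using hanti hs₁ (hs₁.trans hs) hs
  exact not_tendsto_nhds_of_tendsto_atBot hbot _
    ((hv.comp (tendsto_atTop_atBot.mpr fun r => ⟨τ - r, fun s hs => by linarith⟩)).const_mul σ)

theorem SolOne.not_tendsto_atBot_of_deriv_signs (hp : SolOne b β S ε c u v w q)
    (hS : ContDiff ℝ 1 S) (hb : b ≠ 0) (hβ : 0 ≤ β) (hε : 0 < ε) (hc : 0 < c)
    (hS₀ : ∀ x, 0 < S x) (hS' : ∀ x, 0 ≤ deriv S x) (hq : ∀ t, 0 ≤ q t) (σ τ : ℝ)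
    (hu' : σ * deriv u τ ≤ 0) (hv' : 0 ≤ σ * deriv v τ) (hw' : σ * deriv w τ ≤ 0)
    (hq' : σ * deriv q τ ≤ 0)
    (hstrict : 0 < σ * deriv v τ ∨ σ * deriv w τ < 0 ∨ σ * deriv q τ < 0) (l : ℝ) :
    ¬ Tendsto v atBot (𝓝 l) := by
  have hx0 := hp.backwardCoords_zero hb hε.ne' hc.ne' σ τ
  have hb2 := pow_two_pos_of_ne_zero hb
  have hcε : 0 < c / ε := div_pos hc hε
  refine hp.not_tendsto_atBot_of_backwardCoords hS hb hβ hε hc hS₀ hS' hq (σ := σ) (τ := τ)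
    (fun i => ?_) ?_ l
  · fin_cases i <;> simp [hx0, mul_nonpos_of_nonneg_of_nonpos hc.le hu', hv',
      div_nonpos_of_nonpos_of_nonneg hw' hb2.le, mul_nonpos_of_nonneg_of_nonpos hcε.le hq']
  · simpa [hx0] using hstrict.imp_right
      (Or.imp (div_neg_of_neg_of_pos · hb2) (mul_neg_of_pos_of_neg hcε ·))

theorem SolOne.not_nonconst4_of_deriv_eq_zero (hp : SolOne b β S ε c u v w q)
    (hS : ContDiff ℝ 1 S) {τ : ℝ} (hu' : deriv u τ = 0) (hv' : deriv v τ = 0)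
    (hw' : deriv w τ = 0) (hq' : deriv q τ = 0) : ¬ Nonconst4 u v w q := by
  let F : ℝ × ℝ × ℝ × ℝ → ℝ × ℝ × ℝ × ℝ := fun x =>
    ((x.2.1 - x.1) / c, x.2.2.1, b ^ 2 * (x.2.1 - x.2.2.2 * S x.1),
      ε / c * (1 - x.2.2.2 - β * (x.2.2.2 * S x.1)))
  have hF : ContDiff ℝ 1 F := by fun_prop
  have hP : ∀ t, HasDerivAt (fun t => (u t, v t, w t, q t)) (F (u t, v t, w t, q t)) t :=
    fun t => let ⟨hu, hv, hw, hq⟩ := hp t; hu.prodMk (hv.prodMk (hw.prodMk hq))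
  have hFτ : F (u τ, v τ, w τ, q τ) = 0 := by
    obtain ⟨hu, hv, hw, hq⟩ := hp τ
    rw [hu.deriv] at hu'; rw [hv.deriv] at hv'; rw [hw.deriv] at hw'; rw [hq.deriv] at hq'
    simp [F, hu', hv', hw', hq']
  rintro ⟨t, s, hts⟩
  have hconst := eq_of_hasDerivAt_of_apply_eq_zero hF.contDiffAt hFτ hP rfl
  exact hts ((hconst t).trans (hconst s).symm)

theorem SolOne.deriv_w_pos_of_deriv_q_pos (hp : SolOne b β S ε c u v w q) (hb : b ≠ 0)
    (hε : 0 < ε) (hc : 0 < c) (hβ : 0 ≤ β) {u₀ q₀ : ℝ} (hS₀ : 0 < S u₀)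
    (hq₀ : q₀ = 1 / (1 + β * S u₀)) (hu₀ : u₀ = q₀ * S u₀) {τ : ℝ} (hu' : deriv u τ = 0)
    (huτ : u τ = u₀) (hq' : 0 < deriv q τ) : 0 < deriv w τ := by
  obtain ⟨hu, -, hw, hq⟩ := hp τ
  rw [hu.deriv, div_eq_zero_iff, sub_eq_zero, or_iff_left hc.ne'] at hu'
  rw [hq.deriv, mul_pos_iff_of_pos_left (div_pos hε hc), huτ] at hq'
  rw [hw.deriv, hu', huτ]
  have hlt : q τ < q₀ := by
    rw [hq₀, lt_div_iff₀ (by positivity)]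
    linarith
  nlinarith [pow_two_pos_of_ne_zero hb, mul_lt_mul_of_pos_right hlt hS₀]

end SystemOne

theorem not_on_unstable_manifold_general
    (b β u₀ q₀ : ℝ) (S : ℝ → ℝ)
    (hb : 0 < b) (hβ : 0 < β)
    (hS : ContDiff ℝ 1 S)
    (hS' : ∀ x : ℝ, 0 < deriv S x)
    (hSpos : ∀ x : ℝ, 0 < S x)
    -- (C1): unique equilibrium p₀ = (u₀,u₀,0,q₀)
    (hq₀ : q₀ = 1 / (1 + β * S u₀)) (hu₀ : u₀ = q₀ * S u₀)
    (ε c : ℝ) (hε : 0 < ε) (hc : 0 < c)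
    (u v w q : ℝ → ℝ) (hp : SolOne b β S ε c u v w q)
    (hnc : Nonconst4 u v w q) (τ : ℝ)
    (hcond :
      (deriv u τ = 0 ∧ deriv v τ = 0 ∧ deriv w τ ≤ 0 ∧ deriv q τ ≤ 0 ∧ u₀ ≤ u τ) ∨
      (deriv u τ = 0 ∧ deriv v τ < 0 ∧ deriv w τ = 0 ∧ deriv q τ = 0 ∧ u₀ ≤ u τ) ∨
      (deriv u τ = 0 ∧ deriv v τ ≤ 0 ∧ 0 < deriv q τ ∧ u τ = u₀) ∨
      (deriv u τ = 0 ∧ deriv v τ ≤ 0 ∧ 0 < deriv w τ ∧ 0 ≤ deriv q τ ∧ u₀ ≤ u τ)) :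
    ¬ Tendsto (fun t => (u t, v t, w t, q t)) atBot (𝓝 (u₀, u₀, 0, q₀)) := by
  intro hten
  have hq₀pos : 0 < q₀ := hq₀ ▸ one_div_pos.mpr (by nlinarith [hSpos u₀])
  have hq := hp.q_pos hε hc hten.snd_nhds.snd_nhds.snd_nhds hq₀pos
  have key := fun σ => hp.not_tendsto_atBot_of_deriv_signs hS hb.ne' hβ.le hε hc hSpos
    (fun x => (hS' x).le) (fun t => (hq t).le) σ τ
  refine absurd hten.snd_nhds.fst_nhds ?_
  rcases hcond with ⟨hu', hv', hw', hq', -⟩ | ⟨hu', hv', hw', hq', -⟩ | ⟨hu', hv', hq', huτ⟩ |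
    ⟨hu', hv', hw', hq', -⟩
  · by_cases heq : deriv w τ = 0 ∧ deriv q τ = 0
    · exact absurd hnc (hp.not_nonconst4_of_deriv_eq_zero hS hu' hv' heq.1 heq.2)
    · refine key 1 (by simp [hu']) (by simp [hv']) (by simpa) (by simpa) ?_ u₀
      simp only [one_mul]
      rcases hw'.lt_or_eq with hw' | hw'
      · exact Or.inr (Or.inl hw')
      rcases hq'.lt_or_eq with hq' | hq'
      exacts [Or.inr (Or.inr hq'), absurd ⟨hw', hq'⟩ heq]
  · exact key (-1) (by simp [hu']) (by linarith) (by simp [hw']) (by simp [hq'])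
      (Or.inl (by linarith)) u₀
  · have hw' := hp.deriv_w_pos_of_deriv_q_pos hb.ne' hε hc hβ.le (hSpos u₀) hq₀ hu₀ hu' huτ hq'
    exact key (-1) (by simp [hu']) (by linarith) (by linarith) (by linarith)
      (Or.inr (Or.inl (by linarith))) u₀
  · exact key (-1) (by simp [hu']) (by linarith) (by linarith) (by linarith)
      (Or.inr (Or.inl (by linarith))) u₀

/-- Lemma 5a of the paper. -/
theorem not_on_unstable_manifold
    (b β u₀ q₀ u_m uP u_knee : ℝ) (S : ℝ → ℝ)
    (hb : 0 < b) (hβ : 0 < β)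
    (hS : ContDiff ℝ 1 S)
    (hS' : ∀ x : ℝ, 0 < deriv S x)
    (hSpos : ∀ x : ℝ, 0 < S x) (hSlt : ∀ x : ℝ, S x < 1)
    -- (C1): unique equilibrium p₀ = (u₀,u₀,0,q₀)
    (hq₀ : q₀ = 1 / (1 + β * S u₀)) (hu₀ : u₀ = q₀ * S u₀)
    (hC1 : ∀ u q : ℝ, u = q * S u → q = 1 / (1 + β * S u) → u = u₀ ∧ q = q₀)
    -- (C2): h(u) = u/S(u) has one local max then one local min (at u_knee), no other critical points
    (hC2 : ∃ u_max : ℝ, u_max < u_knee ∧ IsLocalMax (fun x : ℝ => x / S x) u_max ∧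
      IsLocalMin (fun x : ℝ => x / S x) u_knee ∧
      ∀ x : ℝ, deriv (fun y : ℝ => y / S y) x = 0 → x = u_max ∨ x = u_knee)
    -- (C3): h(u) = q₀ has exactly three solutions u₀ < u_m < uP
    (hlt₁ : u₀ < u_m) (hlt₂ : u_m < uP)
    (hC3 : ∀ x : ℝ, x / S x = q₀ ↔ x = u₀ ∨ x = u_m ∨ x = uP)
    -- (C4)
    (hC4 : 0 < ∫ x in u₀..uP, (q₀ * S x - x))
    (ε c : ℝ) (hε : 0 < ε) (hc : 0 < c)
    (u v w q : ℝ → ℝ) (hp : SolOne b β S ε c u v w q)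
    (hnc : Nonconst4 u v w q) (τ : ℝ)
    (hcond :
      (deriv u τ = 0 ∧ deriv v τ = 0 ∧ deriv w τ ≤ 0 ∧ deriv q τ ≤ 0 ∧ u₀ ≤ u τ) ∨
      (deriv u τ = 0 ∧ deriv v τ < 0 ∧ deriv w τ = 0 ∧ deriv q τ = 0 ∧ u₀ ≤ u τ) ∨
      (deriv u τ = 0 ∧ deriv v τ ≤ 0 ∧ 0 < deriv q τ ∧ u τ = u₀) ∨
      (deriv u τ = 0 ∧ deriv v τ ≤ 0 ∧ 0 < deriv w τ ∧ 0 ≤ deriv q τ ∧ u₀ ≤ u τ)) :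
    ¬ Tendsto (fun t => (u t, v t, w t, q t)) atBot (𝓝 (u₀, u₀, 0, q₀)) :=
  not_on_unstable_manifold_general b β u₀ q₀ S hb hβ hS hS' hSpos hq₀ hu₀ ε c hε hc u v w q hp hnc τ
    hcond
end
end

section
/- Let b > 0, c > 0, and a ∈ (0,1). The cubic polynomial f(X) = X³ + (1/c)·X² − b²·X − (b²/c)·(1−a) has exactly three real roots, all simple: exactly one positive root, and two distinct negative roots, one lying in (−∞, −1/c) and one in (−1/c, 0). -/
/-!
Writing `f X = (X + 1/c) (X - b) (X + b) + a b² / c`, one reads off `f (-(1/c)) = f b = a b² / c > 0`,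
`f 0 = -(1 - a) b² / c < 0` and `f (-(b + 1/c)) = -(2 - a) b² / c - b / c² < 0`, so the intermediate
value theorem gives a root in each of `(-(b + 1/c), -(1/c))`, `(-(1/c), 0)` and `(0, b)`. A monic cubic
with three distinct roots `x₁, x₂, x₃` is `(X - x₁)(X - x₂)(X - x₃)`, so it has no other roots and all
three are simple.
-/

section MonicCubic

variable {K : Type*} [Field K] {p q r x₁ x₂ x₃ : K}

theorem monic_cubic_eq_mul_of_roots (h₁₂ : x₁ ≠ x₂) (h₁₃ : x₁ ≠ x₃) (h₂₃ : x₂ ≠ x₃)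
    (e₁ : x₁ ^ 3 + p * x₁ ^ 2 + q * x₁ + r = 0) (e₂ : x₂ ^ 3 + p * x₂ ^ 2 + q * x₂ + r = 0)
    (e₃ : x₃ ^ 3 + p * x₃ ^ 2 + q * x₃ + r = 0) (x : K) :
    x ^ 3 + p * x ^ 2 + q * x + r = (x - x₁) * (x - x₂) * (x - x₃) := by
  -- Vieta's formulas, obtained by dividing differences of the root equations by `xᵢ - xⱼ`.
  have q₁₂ : x₁ ^ 2 + x₁ * x₂ + x₂ ^ 2 + p * (x₁ + x₂) + q = 0 := by
    refine (mul_eq_zero.mp ?_).resolve_left (sub_ne_zero.mpr h₁₂)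
    linear_combination e₁ - e₂
  have q₂₃ : x₂ ^ 2 + x₂ * x₃ + x₃ ^ 2 + p * (x₂ + x₃) + q = 0 := by
    refine (mul_eq_zero.mp ?_).resolve_left (sub_ne_zero.mpr h₂₃)
    linear_combination e₂ - e₃
  have sum : x₁ + x₂ + x₃ + p = 0 := by
    refine (mul_eq_zero.mp ?_).resolve_left (sub_ne_zero.mpr h₁₃)
    linear_combination q₁₂ - q₂₃
  have pairs : x₁ * x₂ + x₁ * x₃ + x₂ * x₃ - q = 0 := by
    linear_combination (x₁ + x₂) * sum - q₁₂
  have prod : x₁ * x₂ * x₃ + r = 0 := by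
    linear_combination e₁ - x₁ ^ 2 * sum + x₁ * pairs
  linear_combination x ^ 2 * sum - x * pairs + prod

end MonicCubic

section Deriv

variable {𝕜 : Type*} [NontriviallyNormedField 𝕜]

theorem hasDerivAt_sub_mul {g : 𝕜 → 𝕜} {x₀ : 𝕜} (hg : DifferentiableAt 𝕜 g x₀) :
    HasDerivAt (fun x => (x - x₀) * g x) (g x₀) x₀ := by
  simpa using ((hasDerivAt_id' x₀).sub_const x₀).fun_mul hg.hasDerivAt

theorem deriv_sub_mul_sub_mul_sub_ne_zero {f : 𝕜 → 𝕜} {x₁ x₂ x₃ : 𝕜}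
    (hf : ∀ x, f x = (x - x₁) * (x - x₂) * (x - x₃)) (h₁₂ : x₁ ≠ x₂) (h₁₃ : x₁ ≠ x₃) :
    deriv f x₁ ≠ 0 := by
  have hf' : f = fun x => (x - x₁) * ((x - x₂) * (x - x₃)) := funext fun x => by rw [hf]; ring
  rw [hf', (hasDerivAt_sub_mul (by fun_prop)).deriv]
  exact mul_ne_zero (sub_ne_zero.mpr h₁₂) (sub_ne_zero.mpr h₁₃)

theorem monic_cubic_roots_simple_of_three_roots {f : 𝕜 → 𝕜} {p q r x₁ x₂ x₃ : 𝕜}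
    (hf : ∀ x, f x = x ^ 3 + p * x ^ 2 + q * x + r)
    (h₁₂ : x₁ ≠ x₂) (h₁₃ : x₁ ≠ x₃) (h₂₃ : x₂ ≠ x₃) (e₁ : f x₁ = 0) (e₂ : f x₂ = 0) (e₃ : f x₃ = 0) :
    deriv f x₁ ≠ 0 ∧ deriv f x₂ ≠ 0 ∧ deriv f x₃ ≠ 0 ∧
      ∀ x, f x = 0 → x = x₁ ∨ x = x₂ ∨ x = x₃ := by
  rw [hf] at e₁ e₂ e₃
  have hfac x : f x = (x - x₁) * (x - x₂) * (x - x₃) := by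
    rw [hf, monic_cubic_eq_mul_of_roots h₁₂ h₁₃ h₂₃ e₁ e₂ e₃]
  refine ⟨deriv_sub_mul_sub_mul_sub_ne_zero hfac h₁₂ h₁₃,
    deriv_sub_mul_sub_mul_sub_ne_zero (x₂ := x₁) (fun x => by rw [hfac]; ring) h₁₂.symm h₂₃,
    deriv_sub_mul_sub_mul_sub_ne_zero (x₂ := x₁) (fun x => by rw [hfac]; ring) h₁₃.symm h₂₃.symm,
    fun x hx => ?_⟩
  simpa [hfac, sub_eq_zero, or_assoc] using hx

end Deriv

/-- the characteristic cubic of the fast system at the leftmost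
equilibrium has three simple real roots: one positive and two negative ones,
one in `(−∞, −1/c)` and one in `(−1/c, 0)`. -/
theorem cubic_roots (b c a : ℝ) (f : ℝ → ℝ)
    (hb : 0 < b) (hc : 0 < c) (ha : 0 < a) (ha1 : a < 1)
    (hf : ∀ X : ℝ, f X = X ^ 3 + 1 / c * X ^ 2 - b ^ 2 * X - b ^ 2 / c * (1 - a)) :
    ∃ x₁ x₂ x₃ : ℝ,
      x₁ < -(1 / c) ∧ -(1 / c) < x₂ ∧ x₂ < 0 ∧ 0 < x₃ ∧
      f x₁ = 0 ∧ f x₂ = 0 ∧ f x₃ = 0 ∧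
      deriv f x₁ ≠ 0 ∧ deriv f x₂ ≠ 0 ∧ deriv f x₃ ≠ 0 ∧
      (∀ x : ℝ, f x = 0 → x = x₁ ∨ x = x₂ ∨ x = x₃) := by
  have hf' X : f X = (X + 1 / c) * (X - b) * (X + b) + a * b ^ 2 / c := by rw [hf]; ring
  have hcont : Continuous f := (continuous_congr fun X => (hf' X).symm).mp (by fun_prop)
  have hc' : 0 < 1 / c := by positivity
  have ha' : 0 < 1 - a := by linarith
  have h_left : f (-(b + 1 / c)) < 0 := by
    have : f (-(b + 1 / c)) = -(b / c * ((1 - a) * b + b + 1 / c)) := by rw [hf']; ring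
    rw [this, neg_neg_iff_pos]; positivity
  have h_mid : 0 < f (-(1 / c)) := by
    rw [hf', neg_add_cancel, zero_mul, zero_mul, zero_add]; positivity
  have h_zero : f 0 < 0 := by
    have : f 0 = -(b ^ 2 / c * (1 - a)) := by rw [hf]; ring
    rw [this, neg_neg_iff_pos]; positivity
  have h_right : 0 < f b := by rw [hf', sub_self, mul_zero, zero_mul, zero_add]; positivity
  obtain ⟨x₁, ⟨-, hx₁⟩, e₁⟩ := intermediate_value_Ioo (by linarith) hcont.continuousOn
    (show (0 : ℝ) ∈ Set.Ioo (f (-(b + 1 / c))) (f (-(1 / c))) from ⟨h_left, h_mid⟩)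
  obtain ⟨x₂, ⟨hx₂, hx₂'⟩, e₂⟩ := intermediate_value_Ioo' (by linarith) hcont.continuousOn
    (show (0 : ℝ) ∈ Set.Ioo (f 0) (f (-(1 / c))) from ⟨h_zero, h_mid⟩)
  obtain ⟨x₃, ⟨hx₃, -⟩, e₃⟩ := intermediate_value_Ioo hb.le hcont.continuousOn
    (show (0 : ℝ) ∈ Set.Ioo (f 0) (f b) from ⟨h_zero, h_right⟩)
  refine ⟨x₁, x₂, x₃, hx₁, hx₂, hx₂', hx₃, e₁, e₂, e₃,
    monic_cubic_roots_simple_of_three_roots (p := 1 / c) (q := -b ^ 2) (r := -(b ^ 2 / c * (1 - a)))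
      (fun X => by rw [hf]; ring) (by linarith) (by linarith) (by linarith) e₁ e₂ e₃⟩
end

section
/- Let b > 0 and a ∈ (0,1). For each c > 0 let λ₁(c) denote the unique positive real root of the cubic f_c(X) = X³ + (1/c)·X² − b²·X − (b²/c)·(1−a). Then λ₁(c) < b for every c > 0, and λ₁ is a strictly increasing function of c on (0,∞). -/
/-!
Write `f_c(x) = x (x² - b²) + (x² - b²(1 - a)) / c`. For `x ≥ b` the first term is nonnegative
and the second is at least `a b² / c > 0`, so every root lies below `b`. At a root
`λ ∈ (0, b)` of `f_{c₁}` the first term is negative, hence `λ² - b²(1 - a) > 0`; raising `c`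
to `c₂` then shrinks the second term, so `f_{c₂}(λ) < 0 < f_{c₂}(b)` and the intermediate value
theorem puts the positive root of `f_{c₂}` in `(λ, b)`.
-/

noncomputable def fastCubic (b a c x : ℝ) : ℝ :=
  x ^ 3 + 1 / c * x ^ 2 - b ^ 2 * x - b ^ 2 / c * (1 - a)

lemma fastCubic_eq (b a c x : ℝ) :
    fastCubic b a c x = x * (x ^ 2 - b ^ 2) + (x ^ 2 - b ^ 2 * (1 - a)) / c := by
  unfold fastCubic
  ring

lemma continuous_fastCubic (b a c : ℝ) : Continuous (fastCubic b a c) := by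
  unfold fastCubic
  fun_prop

lemma fastCubic_pos_of_le {b a c x : ℝ} (hb : 0 < b) (ha : 0 < a) (hc : 0 < c) (hbx : b ≤ x) :
    0 < fastCubic b a c x := by
  have hsq : b ^ 2 ≤ x ^ 2 := pow_le_pow_left₀ hb.le hbx 2
  have hcubic : 0 ≤ x * (x ^ 2 - b ^ 2) := mul_nonneg (hb.le.trans hbx) (sub_nonneg.2 hsq)
  have hquad : 0 < x ^ 2 - b ^ 2 * (1 - a) := by nlinarith [mul_pos (pow_pos hb 2) ha]
  rw [fastCubic_eq]
  have := div_pos hquad hc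
  linarith

lemma lt_of_fastCubic_eq_zero {b a c x : ℝ} (hb : 0 < b) (ha : 0 < a) (hc : 0 < c)
    (hx : fastCubic b a c x = 0) : x < b := by
  by_contra! hbx
  exact (fastCubic_pos_of_le hb ha hc hbx).ne' hx

lemma sq_sub_pos_of_fastCubic_eq_zero {b a c x : ℝ} (hc : 0 < c) (hx : 0 < x) (hxb : x < b)
    (hroot : fastCubic b a c x = 0) : 0 < x ^ 2 - b ^ 2 * (1 - a) := by
  have hcubic : x * (x ^ 2 - b ^ 2) < 0 :=
    mul_neg_of_pos_of_neg hx (by nlinarith)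
  rw [fastCubic_eq] at hroot
  have : 0 < (x ^ 2 - b ^ 2 * (1 - a)) / c := by linarith
  exact (div_pos_iff_of_pos_right hc).1 this

lemma fastCubic_neg_of_lt {b a c₁ c₂ x : ℝ} (hc₁ : 0 < c₁) (h12 : c₁ < c₂) (hx : 0 < x)
    (hxb : x < b) (hroot : fastCubic b a c₁ x = 0) : fastCubic b a c₂ x < 0 := by
  have hquad := sq_sub_pos_of_fastCubic_eq_zero hc₁ hx hxb hroot
  have hshrink : (x ^ 2 - b ^ 2 * (1 - a)) / c₂ < (x ^ 2 - b ^ 2 * (1 - a)) / c₁ :=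
    div_lt_div_of_pos_left hquad hc₁ h12
  rw [fastCubic_eq] at hroot ⊢
  linarith

lemma exists_fastCubic_eq_zero_mem_Ioo {b a c₁ c₂ x : ℝ} (hb : 0 < b) (ha : 0 < a)
    (hc₁ : 0 < c₁) (h12 : c₁ < c₂) (hx : 0 < x) (hroot : fastCubic b a c₁ x = 0) :
    ∃ y ∈ Set.Ioo x b, fastCubic b a c₂ y = 0 := by
  have hxb := lt_of_fastCubic_eq_zero hb ha hc₁ hroot
  exact intermediate_value_Ioo hxb.le (continuous_fastCubic b a c₂).continuousOn
    ⟨fastCubic_neg_of_lt hc₁ h12 hx hxb hroot, fastCubic_pos_of_le hb ha (hc₁.trans h12) le_rfl⟩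

theorem positive_root_lt_b_and_strictMono_general (b a : ℝ) (hb : 0 < b)
    (ha : 0 < a)
    (lam : ℝ → ℝ)
    (hlam : ∀ c : ℝ, 0 < c →
      0 < lam c ∧
      (lam c) ^ 3 + 1 / c * (lam c) ^ 2 - b ^ 2 * lam c - b ^ 2 / c * (1 - a) = 0 ∧
      ∀ x : ℝ, 0 < x →
        x ^ 3 + 1 / c * x ^ 2 - b ^ 2 * x - b ^ 2 / c * (1 - a) = 0 → x = lam c) :
    (∀ c : ℝ, 0 < c → lam c < b) ∧ StrictMonoOn lam (Set.Ioi 0) := by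
  refine ⟨fun c hc => lt_of_fastCubic_eq_zero hb ha hc (hlam c hc).2.1, ?_⟩
  intro c₁ hc₁ c₂ hc₂ h12
  obtain ⟨hpos₁, hroot₁, -⟩ := hlam c₁ hc₁
  obtain ⟨y, ⟨hy, -⟩, hy₀⟩ := exists_fastCubic_eq_zero_mem_Ioo hb ha hc₁ h12 hpos₁ hroot₁
  rwa [← (hlam c₂ hc₂).2.2 y (hpos₁.trans hy) hy₀]

/-- the positive eigenvalue `λ₁(c)` of the fast linearization is
less than `b` and strictly increasing in `c`. -/
theorem positive_root_lt_b_and_strictMono (b a : ℝ) (hb : 0 < b)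
    (ha : 0 < a) (ha1 : a < 1)
    (lam : ℝ → ℝ)
    (hlam : ∀ c : ℝ, 0 < c →
      0 < lam c ∧
      (lam c) ^ 3 + 1 / c * (lam c) ^ 2 - b ^ 2 * lam c - b ^ 2 / c * (1 - a) = 0 ∧
      ∀ x : ℝ, 0 < x →
        x ^ 3 + 1 / c * x ^ 2 - b ^ 2 * x - b ^ 2 / c * (1 - a) = 0 → x = lam c) :
    (∀ c : ℝ, 0 < c → lam c < b) ∧ StrictMonoOn lam (Set.Ioi 0) :=
  positive_root_lt_b_and_strictMono_general b a hb ha lam hlam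
end

section
/- Let b > 0, β > 0, c > 0, ε > 0, s₀ ∈ (0,1), and a ∈ (0,1). The quartic polynomial g(X) = X⁴ + (1/c)·(1 + ε·(β·s₀ + 1))·X³ + (−b² + (ε/c²)·(β·s₀ + 1))·X² + (b²/c)·(a − 1 − ε·(β·s₀ + 1))·X + (b²·ε/c²)·(a − 1 − β·s₀) has exactly one complex root with positive real part; this root is real, and it is strictly greater than the unique positive real root λ₁ of the cubic f(X) = X³ + (1/c)·X² − b²·X − (b²/c)·(1−a). -/
/-!
With `σ = β s₀ + 1` the quartic is `(X + εσ/c) f(X) - a b² ε β s₀ / c²`, so it is negative at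
`λ₁` and tends to `+∞`: it has a real root `λ > λ₁`. The cubic cofactor of `X - λ` satisfies the
Routh–Hurwitz conditions `p, r > 0`, `p q > r` (the last one because `f(λ) > 0`), so all of its
roots lie in the open left half-plane.
-/

open Filter Set

open Polynomial in
lemma tendsto_quartic_atTop (a₃ a₂ a₁ a₀ : ℝ) :
    Tendsto (fun x : ℝ => x ^ 4 + a₃ * x ^ 3 + a₂ * x ^ 2 + a₁ * x + a₀) atTop atTop := by
  set P : ℝ[X] := X ^ 4 + C a₃ * X ^ 3 + C a₂ * X ^ 2 + C a₁ * X + C a₀ with hP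
  have hmonic : P.Monic := by rw [hP]; monicity!
  have hdeg : P.natDegree = 4 := by rw [hP]; compute_degree!
  simpa [hP] using P.tendsto_atTop_of_leadingCoeff_nonneg
    (by rw [← natDegree_pos_iff_degree_pos, hdeg]; norm_num) (by rw [hmonic.leadingCoeff]; norm_num)

lemma re_neg_of_cubic_eq_zero {p q r : ℝ} (hp : 0 < p) (hr : 0 < r) (hpq : r < p * q) {z : ℂ}
    (hz : z ^ 3 + p * z ^ 2 + q * z + r = 0) : z.re < 0 := by
  obtain ⟨x, u⟩ := z
  have hre := congrArg Complex.re hz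
  have him := congrArg Complex.im hz
  simp only [pow_succ, pow_zero, one_mul, Complex.add_re, Complex.add_im, Complex.mul_re,
    Complex.mul_im, Complex.ofReal_re, Complex.ofReal_im, zero_mul, sub_zero, add_zero,
    Complex.zero_re, Complex.zero_im] at hre him
  have hq : 0 < q := pos_of_mul_pos_right (hr.trans hpq) hp.le
  by_contra! hx
  simp only at hx
  rcases eq_or_ne u 0 with rfl | hu
  · nlinarith [pow_nonneg hx 3]
  · have hu2 : u ^ 2 = 3 * x ^ 2 + 2 * p * x + q :=
      mul_left_cancel₀ hu (by linear_combination -him)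
    have : p * q - r = -(2 * x * ((x + p) ^ 2 + u ^ 2)) := by
      linear_combination -hre - (x + p) * hu2
    nlinarith [mul_nonneg hx (add_nonneg (sq_nonneg (x + p)) (sq_nonneg u))]

lemma eq_of_quartic_eq_zero_of_re_nonneg {a₃ a₂ a₁ a₀ l : ℝ} (hl : 0 < l)
    (hroot : l ^ 4 + a₃ * l ^ 3 + a₂ * l ^ 2 + a₁ * l + a₀ = 0)
    (h₃ : 0 < a₃ + l) (h₀ : a₀ < 0) (hhurwitz : a₁ < a₃ * (a₂ + l * (a₃ + l))) {y : ℂ}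
    (hy : y ^ 4 + a₃ * y ^ 3 + a₂ * y ^ 2 + a₁ * y + a₀ = 0) (hre : 0 ≤ y.re) : y = l := by
  set p := a₃ + l
  set q := a₂ + l * p
  set r := a₁ + l * q
  have hr : 0 < r := by
    have hlr : l * r = -a₀ := by linear_combination hroot
    exact pos_of_mul_pos_right (by linarith) hl.le
  have hpq : r < p * q := by linear_combination hhurwitz
  have hroot' : (l : ℂ) ^ 4 + a₃ * l ^ 3 + a₂ * l ^ 2 + a₁ * l + a₀ = 0 := by exact_mod_cast hroot
  have hfactor : (y - l) * (y ^ 3 + p * y ^ 2 + q * y + r) = 0 := by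
    simp only [p, q, r]
    push_cast
    linear_combination hy - hroot'
  have hcubic : y ^ 3 + p * y ^ 2 + q * y + r ≠ 0 := fun h =>
    (re_neg_of_cubic_eq_zero h₃ hr hpq h).not_ge hre
  exact sub_eq_zero.mp ((mul_eq_zero.mp hfactor).resolve_right hcubic)

lemma hurwitz_condition_of_cubic_pos {a b c ε σ l : ℝ} (hc : 0 < c) (hε : 0 ≤ ε) (hσ : 0 ≤ σ)
    (ha : a ≤ 1) (hl : 0 < l)
    (hf : 0 < l ^ 3 + 1 / c * l ^ 2 - b ^ 2 * l - b ^ 2 / c * (1 - a)) :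
    b ^ 2 / c * (a - 1 - ε * σ) <
      (1 + ε * σ) / c * (-(b ^ 2) + ε / c ^ 2 * σ + l * ((1 + ε * σ) / c + l)) := by
  have hab : a * b ^ 2 < l ^ 2 + l / c := by
    have hpos : 0 < l * (l ^ 2 + l / c - b ^ 2) := by
      have : 0 ≤ b ^ 2 / c * (1 - a) := mul_nonneg (by positivity) (by linarith)
      linear_combination hf + this
    linarith [pos_of_mul_pos_right hpos hl.le, mul_le_of_le_one_left (sq_nonneg b) ha]
  have hdiff : (1 + ε * σ) / c * (-(b ^ 2) + ε / c ^ 2 * σ + l * ((1 + ε * σ) / c + l))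
      - b ^ 2 / c * (a - 1 - ε * σ) = (l ^ 2 + l / c - a * b ^ 2) / c + ε * σ / c ^ 3
        + 2 * l * ε * σ / c ^ 2 + (ε * σ) ^ 2 / c ^ 3 + l * (ε * σ) ^ 2 / c ^ 2
        + l ^ 2 * ε * σ / c := by
    field_simp
    ring
  have hmain : 0 < (l ^ 2 + l / c - a * b ^ 2) / c := div_pos (by linarith) hc
  have hrest : 0 ≤ ε * σ / c ^ 3 + 2 * l * ε * σ / c ^ 2 + (ε * σ) ^ 2 / c ^ 3
      + l * (ε * σ) ^ 2 / c ^ 2 + l ^ 2 * ε * σ / c := by positivity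
  linarith

theorem quartic_unique_unstable_root_general (b β c ε s₀ a lam1 : ℝ) (g : ℂ → ℂ)
    (hb : 0 < b) (hβ : 0 < β) (hc : 0 < c) (hε : 0 < ε)
    (hs₀ : 0 < s₀) (ha : 0 < a) (ha1 : a < 1)
    (hlam1pos : 0 < lam1)
    (hlam1root : lam1 ^ 3 + 1 / c * lam1 ^ 2 - b ^ 2 * lam1 - b ^ 2 / c * (1 - a) = 0)
    (hg : ∀ X : ℂ, g X =
      X ^ 4 + (((1 + ε * (β * s₀ + 1)) / c : ℝ) : ℂ) * X ^ 3 +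
      (((-(b ^ 2) + ε / c ^ 2 * (β * s₀ + 1)) : ℝ) : ℂ) * X ^ 2 +
      ((b ^ 2 / c * (a - 1 - ε * (β * s₀ + 1)) : ℝ) : ℂ) * X +
      ((b ^ 2 * ε / c ^ 2 * (a - 1 - β * s₀) : ℝ) : ℂ)) :
    ∃ z : ℂ, g z = 0 ∧ 0 < z.re ∧ (∀ y : ℂ, g y = 0 → 0 < y.re → y = z) ∧
      z.im = 0 ∧ lam1 < z.re := by
  set Q : ℝ → ℝ := fun x => x ^ 4 + (1 + ε * (β * s₀ + 1)) / c * x ^ 3 +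
    (-(b ^ 2) + ε / c ^ 2 * (β * s₀ + 1)) * x ^ 2 + b ^ 2 / c * (a - 1 - ε * (β * s₀ + 1)) * x +
    b ^ 2 * ε / c ^ 2 * (a - 1 - β * s₀)
  have hfactor : ∀ x, Q x = (x + ε * (β * s₀ + 1) / c) *
      (x ^ 3 + 1 / c * x ^ 2 - b ^ 2 * x - b ^ 2 / c * (1 - a)) -
        a * b ^ 2 * ε * β * s₀ / c ^ 2 := by
    intro x
    simp only [Q]
    field_simp
    ring
  have hQlam1 : Q lam1 < 0 := by
    rw [hfactor, hlam1root, mul_zero, zero_sub, neg_lt_zero]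
    positivity
  obtain ⟨l, hl1, hl⟩ : ∃ l ∈ Ioi lam1, Q l = 0 :=
    intermediate_value_Ioi (by fun_prop) (tendsto_quartic_atTop _ _ _ _) hQlam1
  have hl0 : 0 < l := hlam1pos.trans hl1
  have hfl : 0 < l ^ 3 + 1 / c * l ^ 2 - b ^ 2 * l - b ^ 2 / c * (1 - a) := by
    have hprod : 0 < (l + ε * (β * s₀ + 1) / c) *
        (l ^ 3 + 1 / c * l ^ 2 - b ^ 2 * l - b ^ 2 / c * (1 - a)) := by
      linarith [hfactor l, show 0 < a * b ^ 2 * ε * β * s₀ / c ^ 2 by positivity]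
    exact pos_of_mul_pos_right hprod (by positivity)
  refine ⟨l, by rw [hg]; exact_mod_cast hl, by simpa using hl0, fun y hy hre => ?_, by simp,
    by simpa using hl1⟩
  rw [hg] at hy
  refine eq_of_quartic_eq_zero_of_re_nonneg hl0 hl (by positivity)
    (mul_neg_of_pos_of_neg (by positivity) (by linarith [mul_pos hβ hs₀])) ?_ hy hre.le
  exact hurwitz_condition_of_cubic_pos hc hε.le (by positivity) ha1.le hl0 hfl

/-- the characteristic quartic of the linearization of the full
system (1) at the equilibrium has exactly one root with positive real part;
this root is real and exceeds the positive root `lam1` of the `ε = 0` cubic. -/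
theorem quartic_unique_unstable_root (b β c ε s₀ a lam1 : ℝ) (g : ℂ → ℂ)
    (hb : 0 < b) (hβ : 0 < β) (hc : 0 < c) (hε : 0 < ε)
    (hs₀ : 0 < s₀) (hs₀1 : s₀ < 1) (ha : 0 < a) (ha1 : a < 1)
    (hlam1pos : 0 < lam1)
    (hlam1root : lam1 ^ 3 + 1 / c * lam1 ^ 2 - b ^ 2 * lam1 - b ^ 2 / c * (1 - a) = 0)
    (hlam1uniq : ∀ x : ℝ, 0 < x →
      x ^ 3 + 1 / c * x ^ 2 - b ^ 2 * x - b ^ 2 / c * (1 - a) = 0 → x = lam1)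
    (hg : ∀ X : ℂ, g X =
      X ^ 4 + (((1 + ε * (β * s₀ + 1)) / c : ℝ) : ℂ) * X ^ 3 +
      (((-(b ^ 2) + ε / c ^ 2 * (β * s₀ + 1)) : ℝ) : ℂ) * X ^ 2 +
      ((b ^ 2 / c * (a - 1 - ε * (β * s₀ + 1)) : ℝ) : ℂ) * X +
      ((b ^ 2 * ε / c ^ 2 * (a - 1 - β * s₀) : ℝ) : ℂ)) :
    ∃ z : ℂ, g z = 0 ∧ 0 < z.re ∧ (∀ y : ℂ, g y = 0 → 0 < y.re → y = z) ∧
      z.im = 0 ∧ lam1 < z.re :=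
  quartic_unique_unstable_root_general b β c ε s₀ a lam1 g hb hβ hc hε hs₀ ha ha1 hlam1pos hlam1root
    hg
end
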